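/- arXiv:2509.05854 — 8 statements merged into one kernel-verified Lean document; each statement's English description precedes it below -/
import Mathlib

section
/- Let κ ≥ λ be infinite regular cardinals. Then the relation (ℕ→ℕ, ≤_∞) fails to have calibre (κ, λ) if and only if λ = 𝔟 = 𝔡 = κ. -/
open Set Topology Filter

universe u v u' v'

/-- A relation: a triple consisting of a domain, a range, and a relation between them. -/
structure TRel : Type (max (u + 1) (v + 1)) where
  dom : Type u
  rng : Type v
  rel : dom → rng → Prop

namespace TRel

/-- A Tukey morphism from `A` to `B`: `A ≥_T B`. -/
def Tukey (A : TRel.{u, v}) (B : TRel.{u', v'}) : Prop :=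
  ∃ (ψ : B.dom → A.dom) (φ : A.rng → B.rng),
    ∀ (b : B.dom) (a : A.rng), A.rel (ψ b) a → B.rel b (φ a)

/-- Tukey equivalence. -/
def TukeyEquiv (A : TRel.{u, v}) (B : TRel.{u', v'}) : Prop :=
  A.Tukey B ∧ B.Tukey A

/-- `C` is cofinal in the relation `A`. -/
def Cofinal (A : TRel) (C : Set A.rng) : Prop :=
  ∀ x : A.dom, ∃ y ∈ C, A.rel x y

/-- `U` is bounded in the relation `A`. -/
def Bounded (A : TRel) (U : Set A.dom) : Prop :=
  ∃ y : A.rng, ∀ x ∈ U, A.rel x y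

/-- The cofinality of a relation: the least cardinality of a cofinal set. -/
noncomputable def cofin (A : TRel) : Cardinal :=
  sInf {c | ∃ C : Set A.rng, A.Cofinal C ∧ Cardinal.mk C = c}

/-- The additivity of a relation: the least cardinality of an unbounded set. -/
noncomputable def addit (A : TRel) : Cardinal :=
  sInf {c | ∃ U : Set A.dom, ¬A.Bounded U ∧ Cardinal.mk U = c}

/-- A relation has calibre `(κ, lam)` if every κ-sized subset of the domain has
a lam-sized subset which is bounded. -/
def Calibre (A : TRel) (κ lam : Cardinal) : Prop :=
  ∀ S : Set A.dom, Cardinal.mk S = κ → ∃ T ⊆ S, Cardinal.mk T = lam ∧ A.Bounded T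

/-- The product of two relations. -/
def prod (A : TRel.{u, v}) (B : TRel.{u', v'}) : TRel :=
  ⟨A.dom × B.dom, A.rng × B.rng, fun x y => A.rel x.1 y.1 ∧ B.rel x.2 y.2⟩

/-- `A & B`, read `A with B`. -/
def with' (A : TRel.{u, v}) (B : TRel.{u', v'}) : TRel :=
  ⟨A.dom ⊕ B.dom, A.rng × B.rng,
    fun x y => Sum.elim (fun a => A.rel a y.1) (fun b => B.rel b y.2) x⟩

/-- The sum `A + B` of two relations. -/
def add (A : TRel.{u, v}) (B : TRel.{u', v'}) : TRel :=
  ⟨A.dom ⊕ B.dom, A.rng ⊕ B.rng,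
    fun x y =>
      match x, y with
      | Sum.inl a, Sum.inl b => A.rel a b
      | Sum.inr a, Sum.inr b => B.rel a b
      | _, _ => False⟩

/-- The sum of a family of relations. -/
def sigmaSum {ι : Type*} (A : ι → TRel.{u, v}) : TRel :=
  ⟨Σ i, (A i).dom, Σ i, (A i).rng,
    fun x y => ∃ (i : ι) (a : (A i).dom) (b : (A i).rng),
      x = ⟨i, a⟩ ∧ y = ⟨i, b⟩ ∧ (A i).rel a b⟩

end TRel

/-- `f ≤* g`: eventual domination. -/
def leStar (f g : ℕ → ℕ) : Prop := {n | ¬f n ≤ g n}.Finite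

/-- `f ≤_∞ g`: `f n ≤ g n` for infinitely many `n`. -/
def leInf (f g : ℕ → ℕ) : Prop := {n | f n ≤ g n}.Infinite

/-- The relation `(ℕ → ℕ, ≤*)`. -/
def leStarRel : TRel := ⟨ℕ → ℕ, ℕ → ℕ, leStar⟩

/-- The relation `(ℕ → ℕ, ≤_∞)`. -/
def leInfRel : TRel := ⟨ℕ → ℕ, ℕ → ℕ, leInf⟩

/-- The relation `ω = (ℕ, ℕ, ≤)`. -/
def omegaRel : TRel := ⟨ℕ, ℕ, (· ≤ ·)⟩

/-- The Baire space `(ℕ → ℕ, ≤)` with the coordinatewise order. -/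
def baireRel : TRel := ⟨ℕ → ℕ, ℕ → ℕ, (· ≤ ·)⟩

/-- The bounding number `𝔟`. -/
noncomputable def bCard : Cardinal := leStarRel.addit

/-- The dominating number `𝔡`. -/
noncomputable def dCard : Cardinal := leStarRel.cofin

section Topology

variable (X : Type u) [TopologicalSpace X]

/-- The infinite convergent sequences with their limit: images of embeddings of `ω + 1`. -/
def CSplus : Set (Set X) :=
  {S | ∃ e : OnePoint ℕ → X, Topology.IsEmbedding e ∧ S = Set.range e}

/-- The infinite convergent sequences without their limit. -/
def CS : Set (Set X) :=
  {S | ∃ e : OnePoint ℕ → X, Topology.IsEmbedding e ∧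
    S = e '' Set.range ((↑) : ℕ → OnePoint ℕ)}

/-- The infinite convergent sequences converging to `x`, without the limit `x`. -/
def CSpt {X : Type u} [TopologicalSpace X] (x : X) : Set (Set X) :=
  {S | ∃ e : OnePoint ℕ → X, Topology.IsEmbedding e ∧ e OnePoint.infty = x ∧
    S = e '' Set.range ((↑) : ℕ → OnePoint ℕ)}

/-- The non-closed subsets of `X`. -/
def NC : Set (Set X) := {F | ¬IsClosed F}

/-- `S ̸⊥ T` : `S ∩ T` is not closed in the subspace `T`. -/
def NotClosedIn {X : Type u} [TopologicalSpace X] (S T : Set X) : Prop :=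
  ¬∃ C : Set X, IsClosed C ∧ S ∩ T = C ∩ T

/-- The k-structure `𝐤(X) = (CS(X), K(X), ̸⊥)`. -/
def kRel : TRel :=
  ⟨↥(CS X), {K : Set X // IsCompact K}, fun S K => NotClosedIn S.1 K.1⟩

/-- The compact-cover structure `𝐤𝐜(X) = (X, K(X), ∈)`. -/
def kcRel : TRel :=
  ⟨X, {K : Set X // IsCompact K}, fun x K => x ∈ K.1⟩

/-- The sequential structure `𝐬𝐞𝐪(X) = (CS(X), CS(X), ii)`. -/
def seqRel : TRel :=
  ⟨↥(CS X), ↥(CS X), fun S T => (S.1 ∩ T.1).Infinite⟩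

/-- The relation `𝐬𝐞𝐪(x, X) = (CS(x,X), CS(x,X), ii)`. -/
def seqPtRel {X : Type u} [TopologicalSpace X] (x : X) : TRel :=
  ⟨↥(CSpt x), ↥(CSpt x), fun S T => (S.1 ∩ T.1).Infinite⟩

/-- The set `X′` of non-isolated points of `X`. -/
def nonIsolated : Set X := {x | ¬IsOpen ({x} : Set X)}

/-- The set `X^#` of points of `X` with no compact neighborhood. -/
def nonLC : Set X := {x | ¬∃ K : Set X, IsCompact K ∧ K ∈ nhds x}

end Topology

/-- The relation `P(κ) = ((([κ]^{<ω})^ω)_∞, i_∞)`. -/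
def Prel (κ : Cardinal.{u}) : TRel :=
  ⟨{F : ℕ → Finset κ.out // {n | F n ≠ ∅}.Infinite},
   {F : ℕ → Finset κ.out // {n | F n ≠ ∅}.Infinite},
   fun F G => {n | ∃ x, x ∈ F.1 n ∧ x ∈ G.1 n}.Infinite⟩

/-- The relation `((∏_n [κ_n]^{<ω})_∞, i_∞)` for a sequence of cardinals `κ_n = c n`. -/
def Qrel (c : ℕ → Cardinal.{u}) : TRel :=
  ⟨{F : (n : ℕ) → Finset (c n).out // {n | F n ≠ ∅}.Infinite},
   {F : (n : ℕ) → Finset (c n).out // {n | F n ≠ ∅}.Infinite},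
   fun F G => {n | ∃ x, x ∈ F.1 n ∧ x ∈ G.1 n}.Infinite⟩

/-- The relation `(κ, =)` for a cardinal `κ`. -/
def eqCardRel (κ : Cardinal.{u}) : TRel := ⟨κ.out, κ.out, Eq⟩

/-- The relation `(Λ, =)` for a set `Λ`. -/
def eqSetRel {X : Type u} (A : Set X) : TRel := ⟨↥A, ↥A, Eq⟩

/-- The relation `S(κ) = Σ_n P(κ_n) × (κ_n, =)` for a sequence of cardinals `κ_n = c n`. -/
def Srel (c : ℕ → Cardinal.{u}) : TRel :=
  TRel.sigmaSum fun n => (Prel (c n)).prod (eqCardRel (c n))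

/-- The relation `𝟎` with empty domain and range. -/
def zeroRel : TRel := ⟨PEmpty, PEmpty, fun _ _ => False⟩

/-!
If `(ℕ → ℕ, ≤_∞)` fails calibre `(κ, λ)`, witnessed by `S` with `|S| = κ`, then every
`λ`-subset of `S` is `≤_∞`-unbounded, i.e. `≤*`-dominating, so `𝔡 ≤ λ`; and an unbounded
family of size `𝔟 < κ` would, by regularity of `κ`, give a single function `≤_∞`-bounding
`κ` elements of `S`, so `κ ≤ 𝔟`. Hence `λ ≤ κ ≤ 𝔟 ≤ 𝔡 ≤ λ`. Conversely, if `𝔟 = 𝔡 = κ`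
there is a strictly `≤*`-increasing dominating scale of length `κ`; every `κ`-subset of it is
cofinal in the scale, hence dominating, hence `≤_∞`-unbounded.
-/

open Cardinal

theorem mk_Iio_ord_toType_lt {c : Cardinal} (a : c.ord.ToType) : #(Iio a) < c := by
  simpa using mk_Iio_lt a

theorem exists_mem_ge_of_le_mk {c : Cardinal} {I : Set c.ord.ToType} (hI : c ≤ #I)
    (a : c.ord.ToType) : ∃ b ∈ I, a ≤ b := by
  by_contra! h
  exact ((mk_le_mk_of_subset h).trans_lt (mk_Iio_ord_toType_lt a)).not_ge hI

section LeStar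

variable {f g h : ℕ → ℕ}

theorem leStar_iff_eventuallyLE : leStar f g ↔ f ≤ᶠ[cofinite] g := Iff.rfl

theorem leStar_of_le (hfg : f ≤ g) : leStar f g :=
  leStar_iff_eventuallyLE.2 (Eventually.of_forall hfg)

theorem leStar.trans (hfg : leStar f g) (hgh : leStar g h) : leStar f h :=
  leStar_iff_eventuallyLE.2 (EventuallyLE.trans hfg hgh)

theorem not_leStar_add_one (f : ℕ → ℕ) : ¬leStar (f + 1) f := fun hf =>
  let ⟨n, hn⟩ := (leStar_iff_eventuallyLE.1 hf).exists
  by simp at hn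

theorem leStar_of_add_one_leStar (hfg : leStar (f + 1) g) : leStar f g :=
  (leStar_of_le fun n => Nat.le_succ (f n)).trans hfg

theorem not_leInf_iff : ¬leInf f g ↔ leStar (g + 1) f := by
  have hset : {n | f n ≤ g n} = {n | ¬(g + 1) n ≤ f n} := by
    ext n
    simp
  rw [leInf, Set.not_infinite, leStar, hset]

theorem leInf_of_not_leStar (hgf : ¬leStar g f) : leInf f g :=
  Set.Infinite.mono (fun n (hn : ¬g n ≤ f n) => (Nat.le_of_not_le hn : f n ≤ g n)) hgf

end LeStar

namespace TRel

variable {A : TRel}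

theorem not_bounded_iff {U : Set A.dom} : ¬A.Bounded U ↔ ∀ y, ∃ x ∈ U, ¬A.rel x y := by
  simp [Bounded]

theorem not_calibre_iff {κ lam : Cardinal} :
    ¬A.Calibre κ lam ↔ ∃ S : Set A.dom, #S = κ ∧ ∀ T ⊆ S, #T = lam → ¬A.Bounded T := by
  simp [Calibre]

theorem addit_le_mk {U : Set A.dom} (hU : ¬A.Bounded U) : A.addit ≤ #U :=
  csInf_le (OrderBot.bddBelow _) ⟨U, hU, rfl⟩

theorem cofin_le_mk {C : Set A.rng} (hC : A.Cofinal C) : A.cofin ≤ #C :=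
  csInf_le (OrderBot.bddBelow _) ⟨C, hC, rfl⟩

theorem bounded_of_mk_lt_addit {U : Set A.dom} (hU : #U < A.addit) : A.Bounded U := by
  by_contra h
  exact (addit_le_mk h).not_gt hU

theorem exists_not_bounded_mk_eq_addit (h : ¬A.Bounded Set.univ) :
    ∃ U : Set A.dom, ¬A.Bounded U ∧ #U = A.addit :=
  csInf_mem (s := {c | ∃ U : Set A.dom, ¬A.Bounded U ∧ #U = c}) ⟨_, Set.univ, h, rfl⟩

theorem exists_cofinal_mk_eq_cofin (h : A.Cofinal Set.univ) :
    ∃ C : Set A.rng, A.Cofinal C ∧ #C = A.cofin :=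
  csInf_mem (s := {c | ∃ C : Set A.rng, A.Cofinal C ∧ #C = c}) ⟨_, Set.univ, h, rfl⟩

end TRel

section BoundingDominating

theorem leStarRel_not_bounded_univ : ¬leStarRel.Bounded Set.univ := by
  rintro ⟨y : ℕ → ℕ, hy⟩
  exact not_leStar_add_one y (hy (y + 1) trivial)

theorem leStarRel_cofinal_univ : leStarRel.Cofinal Set.univ :=
  fun x => ⟨x, trivial, leStar_of_le le_rfl⟩

theorem leStarRel_not_bounded_of_cofinal {C : Set (ℕ → ℕ)} (hC : leStarRel.Cofinal C) :
    ¬leStarRel.Bounded C := by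
  rintro ⟨y : ℕ → ℕ, hy⟩
  obtain ⟨g, hgC, hyg⟩ := hC (y + 1)
  exact not_leStar_add_one y (hyg.trans (hy g hgC))

theorem bCard_le_dCard : bCard ≤ dCard := by
  obtain ⟨C, hC, hCd⟩ := TRel.exists_cofinal_mk_eq_cofin leStarRel_cofinal_univ
  exact (TRel.addit_le_mk (leStarRel_not_bounded_of_cofinal hC)).trans_eq hCd

end BoundingDominating

section Calibre

variable {κ lam : Cardinal.{0}}

theorem cofinal_of_not_leInfRel_bounded {T : Set (ℕ → ℕ)} (hT : ¬leInfRel.Bounded T) :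
    leStarRel.Cofinal T := by
  intro g
  obtain ⟨x, hxT, hgx⟩ : ∃ x ∈ T, ¬leInf x g := TRel.not_bounded_iff.1 hT g
  exact ⟨x, hxT, leStar_of_add_one_leStar (not_leInf_iff.1 hgx)⟩

theorem dCard_le_of_not_calibre (hle : lam ≤ κ) (h : ¬leInfRel.Calibre κ lam) :
    dCard ≤ lam := by
  obtain ⟨S, hSκ, hS⟩ := TRel.not_calibre_iff.1 h
  obtain ⟨T, hTS, hTlam⟩ := le_mk_iff_exists_subset.1 (hle.trans hSκ.ge)
  exact hTlam ▸ TRel.cofin_le_mk (cofinal_of_not_leInfRel_bounded (hS T hTS hTlam))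

theorem le_bCard_of_not_calibre (hκ : κ.IsRegular) (hle : lam ≤ κ)
    (h : ¬leInfRel.Calibre κ lam) : κ ≤ bCard := by
  obtain ⟨S, hSκ, hS⟩ := TRel.not_calibre_iff.1 h
  by_contra! hbκ
  obtain ⟨U, hU, hUb⟩ : ∃ U : Set (ℕ → ℕ), ¬leStarRel.Bounded U ∧ #U = bCard :=
    TRel.exists_not_bounded_mk_eq_addit leStarRel_not_bounded_univ
  have hbelow : ∀ x : S, ∃ u : U, leInf x.1 u := fun x => by
    obtain ⟨u, huU, hxu⟩ : ∃ u ∈ U, ¬leStar u x.1 := TRel.not_bounded_iff.1 hU x.1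
    exact ⟨⟨u, huU⟩, leInf_of_not_leStar hxu⟩
  choose φ hφ using hbelow
  obtain ⟨u, hu⟩ := infinite_pigeonhole_card φ κ hSκ.ge hκ.aleph0_le
    (by rwa [hκ.cof_ord, hUb])
  rw [← mk_image_eq Subtype.val_injective] at hu
  obtain ⟨T, hT, hTlam⟩ := le_mk_iff_exists_subset.1 (hle.trans hu)
  refine hS T (hT.trans (Subtype.coe_image_subset S _)) hTlam ⟨(u : ℕ → ℕ), ?_⟩
  rintro _ hxT
  obtain ⟨x, hxu, rfl⟩ := hT hxT
  exact hxu ▸ hφ x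

theorem exists_leStar_add_one_le {V : Set (ℕ → ℕ)} (hV : #V < bCard) (d : ℕ → ℕ) :
    ∃ v, d ≤ v ∧ ∀ x ∈ V, leStar (x + 1) v := by
  obtain ⟨y : ℕ → ℕ, hy⟩ := TRel.bounded_of_mk_lt_addit hV
  refine ⟨(y + 1) ⊔ d, le_sup_right, fun x hx => ?_⟩
  refine Eventually.mono (leStar_iff_eventuallyLE.1 (hy x hx)) fun n hn => ?_
  simp only [Pi.add_apply, Pi.one_apply, Pi.sup_apply]
  exact le_sup_of_le_left (Nat.add_le_add_right hn 1)

theorem exists_scale (hb : bCard = κ) (hd : dCard = κ) :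
    ∃ f : κ.ord.ToType → ℕ → ℕ,
      (∀ ⦃a b⦄, a < b → leStar (f a + 1) (f b)) ∧ leStarRel.Cofinal (range f) := by
  obtain ⟨C, hC, hCd⟩ : ∃ C : Set (ℕ → ℕ), leStarRel.Cofinal C ∧ #C = dCard :=
    TRel.exists_cofinal_mk_eq_cofin leStarRel_cofinal_univ
  obtain ⟨e⟩ : Nonempty (κ.ord.ToType ≃ C) := Cardinal.eq.1 (by simp [hCd, hd])
  have hstep : ∀ a (prev : ∀ b < a, ℕ → ℕ),
      ∃ v, (e a : ℕ → ℕ) ≤ v ∧ ∀ b (hba : b < a), leStar (prev b hba + 1) v := fun a prev => by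
    obtain ⟨v, hev, hv⟩ := exists_leStar_add_one_le (V := range fun b : Iio a => prev b b.2)
      ((mk_range_le.trans_lt (mk_Iio_ord_toType_lt a)).trans_eq hb.symm) (e a)
    exact ⟨v, hev, fun b hba => hv _ ⟨⟨b, hba⟩, rfl⟩⟩
  choose step hstep_le hstep_lt using hstep
  refine ⟨wellFounded_lt.fix step, fun a b hab => ?_, fun g => ?_⟩
  · rw [wellFounded_lt.fix_eq step b]
    exact hstep_lt b (fun c _ => wellFounded_lt.fix step c) a hab
  · obtain ⟨c, hcC, hgc⟩ := hC g
    refine ⟨_, mem_range_self (e.symm ⟨c, hcC⟩), hgc.trans (leStar_of_le ?_)⟩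
    rw [wellFounded_lt.fix_eq step]
    simpa using hstep_le (e.symm ⟨c, hcC⟩) _

theorem not_calibre_of_scale {f : κ.ord.ToType → ℕ → ℕ}
    (hf : ∀ ⦃a b⦄, a < b → leStar (f a + 1) (f b)) (hcof : leStarRel.Cofinal (range f)) :
    ¬leInfRel.Calibre κ κ := by
  have hmono : ∀ ⦃a b⦄, a ≤ b → leStar (f a) (f b) := fun a b hab =>
    hab.eq_or_lt.elim (fun h => h ▸ leStar_of_le le_rfl) fun h => leStar_of_add_one_leStar (hf h)
  have hinj : Function.Injective f := fun a b hab => by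
    by_contra hne
    rcases lt_or_gt_of_ne hne with h | h
    · exact not_leStar_add_one (f b) (by simpa only [hab] using hf h)
    · exact not_leStar_add_one (f a) (by simpa only [hab] using hf h)
  have hrange : #(range f) = κ := by simp [mk_range_eq f hinj]
  intro hcal
  obtain ⟨T, hTf, hTκ, g : ℕ → ℕ, hg⟩ := hcal (range f) hrange
  obtain ⟨_, ⟨a, rfl⟩, hga⟩ := hcof (g + 1)
  obtain ⟨c, hcT, hac⟩ := exists_mem_ge_of_le_mk
    (mk_preimage_of_injective_of_subset_range f T hinj hTf ▸ hTκ.ge) a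
  exact not_leInf_iff.2 (hga.trans (hmono hac)) (hg _ hcT)

end Calibre

theorem leInf_not_calibre_iff_general (κ lam : Cardinal.{0}) (hκ : κ.IsRegular)
    (hle : lam ≤ κ) :
    ¬leInfRel.Calibre κ lam ↔ (lam = bCard ∧ bCard = dCard ∧ dCard = κ) := by
  constructor
  · intro h
    have hdlam := dCard_le_of_not_calibre hle h
    have hκb := le_bCard_of_not_calibre hκ hle h
    have hbd := bCard_le_dCard
    refine ⟨?_, ?_, ?_⟩ <;> order
  · rintro ⟨rfl, hbd, hdκ⟩
    obtain ⟨f, hf, hcof⟩ := exists_scale (hbd.trans hdκ) hdκ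
    rw [hbd, hdκ]
    exact not_calibre_of_scale hf hcof

/-- for infinite regular cardinals `κ ≥ λ`, the relation `(ℕ→ℕ, ≤_∞)`
fails calibre `(κ, λ)` iff `λ = 𝔟 = 𝔡 = κ`. -/
theorem leInf_not_calibre_iff (κ lam : Cardinal.{0}) (hκ : κ.IsRegular)
    (hlam : lam.IsRegular) (hle : lam ≤ κ) :
    ¬leInfRel.Calibre κ lam ↔ (lam = bCard ∧ bCard = dCard ∧ dCard = κ) :=
  leInf_not_calibre_iff_general κ lam hκ hle
end

section
/- There is no Tukey morphism from (ℕ→ℕ, ≤_∞) & ω to (ℕ→ℕ, ≤_∞) × ω; that is, (ℕ→ℕ, ≤_∞) & ω ̸≥_T (ℕ→ℕ, ≤_∞) × ω. -/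
open Set Topology Filter

universe u v u' v'

/-! If `(ψ, φ)` were a morphism, then for each `g` some `ψ (g, m)` must land in `ω`: a
countable family in `(ℕ → ℕ, ≤_∞)` is bounded, so otherwise `φ` would send one bound to a
natural number above every `m`. Any `ψ (g, m) = inr n` lies below `(0, n)`, so `g ≤_∞ (φ (0, n)).1`;
the countable family `(φ (0, n)).1` would then be `≤_∞`-cofinal, which diagonalisation refutes. -/

theorem exists_forall_eventually_lt (F : ℕ → ℕ → ℕ) :
    ∃ h : ℕ → ℕ, ∀ k, ∀ᶠ n in atTop, F k n < h n := by
  refine ⟨fun n => (Finset.range (n + 1)).sup (F · n) + 1, fun k => ?_⟩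
  filter_upwards [eventually_ge_atTop k] with n hkn
  exact Nat.lt_succ_of_le (Finset.le_sup (f := (F · n)) (Finset.mem_range_succ_iff.2 hkn))

theorem leInf_iff_frequently {f g : ℕ → ℕ} : leInf f g ↔ ∃ᶠ n in atTop, f n ≤ g n :=
  Nat.frequently_atTop_iff_infinite.symm

theorem leInfRel_bounded_range (F : ℕ → ℕ → ℕ) : leInfRel.Bounded (range F) := by
  obtain ⟨h, hF⟩ := exists_forall_eventually_lt F
  refine ⟨h, forall_mem_range.2 fun k => leInf_iff_frequently.2 ?_⟩
  exact ((hF k).mono fun _ => le_of_lt).frequently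

theorem leInfRel_not_cofinal_range (F : ℕ → ℕ → ℕ) : ¬leInfRel.Cofinal (range F) := by
  obtain ⟨h, hF⟩ := exists_forall_eventually_lt F
  intro hcof
  obtain ⟨_, ⟨k, rfl⟩, hk⟩ := hcof h
  exact leInf_iff_frequently.1 hk ((hF k).mono fun _ => not_le_of_gt)

theorem exists_forall_rel_fst_of_tukey_prod_omega {B : TRel}
    (ψ : B.dom × ℕ → (ℕ → ℕ) ⊕ ℕ) (φ : (ℕ → ℕ) × ℕ → B.rng × ℕ)
    (hm : ∀ b a, (leInfRel.with' omegaRel).rel (ψ b) a → (B.prod omegaRel).rel b (φ a))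
    (b : B.dom) : ∃ n, ∀ f, B.rel b (φ (f, n)).1 := by
  have hinr : ∃ m n, ψ (b, m) = Sum.inr n := by
    by_contra! hinl
    have hf : ∀ m, ∃ f, ψ (b, m) = Sum.inl f := fun m => by
      cases hψ : ψ (b, m) with
      | inl f => exact ⟨f, rfl⟩
      | inr n => exact absurd hψ (hinl m n)
    choose f hf using hf
    obtain ⟨h, hh⟩ := leInfRel_bounded_range f
    have hbound : ∀ m, m ≤ (φ (h, (0 : ℕ))).2 := fun m =>
      (hm (b, m) (h, (0 : ℕ)) (by rw [hf m]; exact hh _ (mem_range_self m))).2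
    exact (hbound _).not_gt (Nat.lt_succ_self _)
  obtain ⟨m, n, hψ⟩ := hinr
  exact ⟨n, fun f => (hm (b, m) (f, n) (by rw [hψ]; exact le_refl n)).1⟩

/-- `(ℕ→ℕ, ≤_∞) & ω ̸≥_T (ℕ→ℕ, ≤_∞) × ω`. -/
theorem with_not_tukey_prod : ¬(leInfRel.with' omegaRel).Tukey (leInfRel.prod omegaRel) := by
  rintro ⟨ψ, φ, hm⟩
  refine leInfRel_not_cofinal_range (fun n => (φ ((0 : ℕ → ℕ), n)).1) fun g => ?_
  obtain ⟨n, hn⟩ := exists_forall_rel_fst_of_tukey_prod_omega (B := leInfRel) ψ φ hm g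
  exact ⟨_, mem_range_self n, hn 0⟩
end

section
/- The relation ((([ℕ]^{<ω})^ω)_∞, i_∞) is Tukey equivalent to (ℕ→ℕ, ≤_∞); that is, each admits a Tukey morphism to the other. -/
open Set Topology Filter

universe u v u' v'

/-- The relation `((([ℕ]^{<ω})^ω)_∞, i_∞)`. -/
def PNatRel : TRel :=
  ⟨{F : ℕ → Finset ℕ // {n | F n ≠ ∅}.Infinite},
   {F : ℕ → Finset ℕ // {n | F n ≠ ∅}.Infinite},
   fun F G => {n | ∃ x, x ∈ F.1 n ∧ x ∈ G.1 n}.Infinite⟩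

/-!
A function `g` is coded by the sequence of singletons `{g n}`, and a sequence of finite sets `G` is
sent to `n ↦ max (G n)`. Conversely, a sequence `F` with infinitely many nonempty terms is coded by
choosing, for each `n`, an index `m n > n` with `F (m n)` nonempty and an element `x n ∈ F (m n)`,
while a function `h` is sent to the sequence of initial segments `[0, max_{i ≤ m} h i]`: if
`x n ≤ h n`, then `x n` lies in the `m n`-th segment, and the indices `m n > n` are unbounded.
-/

lemma infinite_setOf_ne_empty_of_forall {F : ℕ → Finset ℕ} (hF : ∀ n, F n ≠ ∅) :
    {n | F n ≠ ∅}.Infinite :=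
  Set.infinite_of_forall_exists_gt fun a => ⟨a + 1, hF _, a.lt_succ_self⟩

theorem PNatRel_tukey_leInfRel : PNatRel.Tukey leInfRel := by
  refine ⟨fun g => ⟨fun n => {g n}, infinite_setOf_ne_empty_of_forall fun _ =>
    Finset.singleton_ne_empty _⟩, fun G n => (G.1 n).sup id, fun g G hgG => hgG.mono ?_⟩
  rintro n ⟨x, hx, hxG⟩
  obtain rfl : x = g n := Finset.mem_singleton.1 hx
  exact Finset.le_sup (f := id) hxG

section NextNonempty

variable (F : {F : ℕ → Finset ℕ // {n | F n ≠ ∅}.Infinite}) (n : ℕ)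

noncomputable def nextNonemptyIdx : ℕ := (F.2.exists_gt n).choose

lemma lt_nextNonemptyIdx : n < nextNonemptyIdx F n := (F.2.exists_gt n).choose_spec.2

lemma nonempty_nextNonemptyIdx : (F.1 (nextNonemptyIdx F n)).Nonempty :=
  Finset.nonempty_iff_ne_empty.2 (F.2.exists_gt n).choose_spec.1

noncomputable def nextElem : ℕ := (nonempty_nextNonemptyIdx F n).choose

lemma nextElem_mem : nextElem F n ∈ F.1 (nextNonemptyIdx F n) :=
  (nonempty_nextNonemptyIdx F n).choose_spec

end NextNonempty

def prefixSup (h : ℕ → ℕ) (m : ℕ) : ℕ := (Finset.range (m + 1)).sup h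

lemma le_prefixSup (h : ℕ → ℕ) {i m : ℕ} (him : i ≤ m) : h i ≤ prefixSup h m :=
  Finset.le_sup (Finset.mem_range.2 (Nat.lt_succ_of_le him))

theorem leInfRel_tukey_PNatRel : leInfRel.Tukey PNatRel := by
  refine ⟨nextElem, fun h => ⟨fun m => Finset.range (prefixSup h m + 1),
    infinite_setOf_ne_empty_of_forall fun _ => Finset.nonempty_range_add_one.ne_empty⟩, ?_⟩
  intro F h hFh
  refine Set.infinite_of_forall_exists_gt fun a => ?_
  obtain ⟨n, hn, han⟩ := hFh.exists_gt a
  have hnm := lt_nextNonemptyIdx F n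
  refine ⟨nextNonemptyIdx F n, ⟨nextElem F n, nextElem_mem F n, ?_⟩, han.trans hnm⟩
  exact Finset.mem_range_succ_iff.2 (le_trans hn (le_prefixSup h hnm.le))

/-- `((([ℕ]^{<ω})^ω)_∞, i_∞)` is Tukey equivalent to `(ℕ→ℕ, ≤_∞)`. -/
theorem PNatRel_tukeyEquiv_leInf : PNatRel.TukeyEquiv leInfRel :=
  ⟨PNatRel_tukey_leInfRel, leInfRel_tukey_PNatRel⟩
end

section
/- A separable metrizable space M is not locally compact if and only if M contains a closed copy of the metric fan 𝔽, i.e. there exists a topological embedding of 𝔽 into M whose image is closed in M. -/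
open Set Topology Filter

universe u v u' v'

/-- The metric fan `𝔽`, realized as the subspace
`{(0,0)} ∪ {(1/(n+1), 1/((n+1)(m+1))) : n, m ∈ ℕ}` of the Euclidean plane. -/
def fanSet : Set (ℝ × ℝ) :=
  {p | p = (0, 0) ∨
    ∃ n m : ℕ, p = (1 / ((n : ℝ) + 1), 1 / ((((n : ℝ) + 1)) * (((m : ℝ) + 1))))}


/-!
A point `x` of a metrizable space without compact neighbourhoods has, inside each of its
neighbourhoods, an infinite set without accumulation points, since compactness is countable
compactness there. Choosing such sets recursively inside a shrinking neighbourhood base at `x`,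
each one avoiding the earlier ones, gives pairwise disjoint closed discrete sets converging to
`x`. Mapping the `n`-th spine of the fan onto a sequence in the `n`-th set and the apex to `x`
is a closed embedding: away from `x` only finitely many of the sets come close, and near `x`
only the late ones do. Conversely, the fan is not locally compact at its apex, and local
compactness passes to closed subspaces.
-/

open Function Metric

section AccPt

variable {X : Type*} [TopologicalSpace X] {c : X}

lemma not_accPt_principal_iff {S : Set X} : ¬AccPt c (𝓟 S) ↔ ∀ᶠ y in 𝓝 c, y ∈ S → y = c := by
  rw [accPt_iff_frequently, not_frequently]
  simp only [not_and, not_imp_not]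

lemma compl_mem_nhds_of_not_accPt {S : Set X} (h : ¬AccPt c (𝓟 S)) (hc : c ∉ S) : Sᶜ ∈ 𝓝 c :=
  (not_accPt_principal_iff.1 h).mono fun _ hyS hy => hc (hyS hy ▸ hy)

lemma not_accPt_iUnion {S : ℕ → Set X} (hS : ∀ n, ¬AccPt c (𝓟 (S n)))
    {U : Set X} (hU : U ∈ 𝓝 c) (htail : ∀ᶠ n in atTop, Disjoint U (S n)) :
    ¬AccPt c (𝓟 (⋃ n, S n)) := by
  obtain ⟨N, hN⟩ := eventually_atTop.1 htail
  have hfin : ∀ᶠ y in 𝓝 c, ∀ n ∈ Iio N, y ∈ S n → y = c :=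
    (eventually_all_finite (finite_Iio N)).2 fun n _ => not_accPt_principal_iff.1 (hS n)
  refine not_accPt_principal_iff.2 ((hfin.and hU).mono fun y ⟨hy, hyU⟩ hyS => ?_)
  obtain ⟨n, hn⟩ := mem_iUnion.1 hyS
  by_cases hnN : n < N
  · exact hy n hnN hn
  · exact absurd hn ((hN n (not_lt.1 hnN)).notMem_of_mem_left hyU)

end AccPt

section Metrizable

variable {X : Type*} [TopologicalSpace X] [TopologicalSpace.MetrizableSpace X]

lemma exists_infinite_subset_forall_not_accPt {K : Set X} (hK : IsClosed K)
    (hK' : ¬IsCompact K) : ∃ S ⊆ K, S.Infinite ∧ ∀ c, ¬AccPt c (𝓟 S) := by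
  rw [isCompact_iff_isSeqCompact, ← isCountablyCompact_iff_isSeqCompact,
    isCountablyCompact_iff_infinite_subset_has_accPt] at hK'
  push Not at hK'
  obtain ⟨S, hSK, hS, hacc⟩ := hK'
  exact ⟨S, hSK, hS, fun c hc =>
    hacc c (hK.closure_subset_iff.2 hSK (mem_closure_iff_clusterPt.2 hc.clusterPt)) hc⟩

lemma exists_infinite_subset_forall_not_accPt_of_mem_nhds {x : X}
    (hx : ∀ K ∈ 𝓝 x, ¬IsCompact K) {V : Set X} (hV : V ∈ 𝓝 x) :
    ∃ S ⊆ V, S.Infinite ∧ x ∉ S ∧ ∀ c, ¬AccPt c (𝓟 S) := by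
  obtain ⟨K, hKx, hK, hKV⟩ := exists_mem_nhds_isClosed_subset hV
  obtain ⟨S, hSK, hS, hacc⟩ := exists_infinite_subset_forall_not_accPt hK (hx K hKx)
  exact ⟨S \ {x}, sdiff_subset.trans (hSK.trans hKV), hS.sdiff (finite_singleton x),
    fun h => h.2 rfl, fun c hc => hacc c (hc.mono (principal_mono.2 sdiff_subset))⟩

lemma exists_disjoint_stages {x : X} (hx : ∀ K ∈ 𝓝 x, ¬IsCompact K) :
    ∃ S : ℕ → Set X, (∀ n, (S n).Infinite ∧ x ∉ S n ∧ ∀ c, ¬AccPt c (𝓟 (S n))) ∧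
      Pairwise (Disjoint on S) ∧ ∀ U ∈ 𝓝 x, ∀ᶠ n in atTop, S n ⊆ U := by
  choose! pick hpick using fun V (hV : V ∈ 𝓝 x) =>
    exists_infinite_subset_forall_not_accPt_of_mem_nhds hx hV
  obtain ⟨B, hB⟩ := (𝓝 x).exists_antitone_basis
  -- each stage is picked inside the previous neighbourhood, away from all earlier stages
  let V : ℕ → Set X := fun n =>
    Nat.rec (motive := fun _ => Set X) (B 0) (fun k W => (W ∩ B (k + 1)) \ pick W) n
  have hV : ∀ n, V n ∈ 𝓝 x := by
    intro n
    induction n with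
    | zero => exact hB.mem 0
    | succ n ih =>
      obtain ⟨-, -, hxS, hacc⟩ := hpick (V n) ih
      exact inter_mem (inter_mem ih (hB.mem _)) (compl_mem_nhds_of_not_accPt (hacc x) hxS)
  have hVanti : Antitone V :=
    antitone_nat_of_succ_le fun n => sdiff_subset.trans inter_subset_left
  have hVB : ∀ n, V n ⊆ B n := by
    rintro (_ | n)
    exacts [subset_rfl, sdiff_subset.trans inter_subset_right]
  refine ⟨fun n => pick (V n), fun n => (hpick (V n) (hV n)).2, ?_, fun U hU => ?_⟩
  · refine (pairwise_disjoint_on _).2 fun n k hnk => ?_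
    have hk : pick (V k) ⊆ V (n + 1) := (hpick (V k) (hV k)).1.trans (hVanti hnk)
    exact disjoint_left.2 fun y hyn hyk => (hk hyk).2 hyn
  · obtain ⟨N, hN⟩ := hB.mem_iff.1 hU
    exact eventually_atTop.2 ⟨N, fun n hn =>
      (hpick (V n) (hV n)).1.trans ((hVanti hn).trans ((hVB N).trans hN))⟩

lemma exists_fan_spines {x : X} (hx : ∀ K ∈ 𝓝 x, ¬IsCompact K) :
    ∃ Y : ℕ → ℕ → X, Injective (uncurry Y) ∧ (∀ n m, Y n m ≠ x) ∧
      (∀ n c, ¬AccPt c (𝓟 (range (Y n)))) ∧ ∀ U ∈ 𝓝 x, ∀ᶠ n in atTop, range (Y n) ⊆ U := by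
  obtain ⟨S, hS, hdisj, hlim⟩ := exists_disjoint_stages hx
  let Y : ℕ → ℕ → X := fun n m => (hS n).1.natEmbedding _ m
  have hYS : ∀ n, range (Y n) ⊆ S n := fun n => range_subset_iff.2 fun m => Subtype.prop _
  refine ⟨Y, fun ⟨n, m⟩ ⟨n', m'⟩ h => ?_, fun n m h => (hS n).2.1 (h ▸ hYS n ⟨m, rfl⟩),
    fun n c hc => (hS n).2.2 c (hc.mono (principal_mono.2 (hYS n))),
    fun U hU => (hlim U hU).mono fun n hn => (hYS n).trans hn⟩
  obtain rfl : n = n' := by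
    by_contra hne
    exact (hdisj hne).ne_of_mem (hYS n ⟨m, rfl⟩) (hYS n' ⟨m', rfl⟩) h
  exact congrArg (Prod.mk n) (((hS n).1.natEmbedding _).injective (Subtype.val_injective h))

end Metrizable

namespace FanSet

noncomputable def pt (n m : ℕ) : ℝ × ℝ := (1 / ((n : ℝ) + 1), 1 / (((n : ℝ) + 1) * ((m : ℝ) + 1)))

def apex : fanSet := ⟨(0, 0), Or.inl rfl⟩

noncomputable def spine (n m : ℕ) : fanSet := ⟨pt n m, Or.inr ⟨n, m, rfl⟩⟩

lemma eq_apex_or_spine (q : fanSet) : q = apex ∨ ∃ n m, q = spine n m := by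
  obtain ⟨p, rfl | ⟨n, m, rfl⟩⟩ := q
  exacts [Or.inl rfl, Or.inr ⟨n, m, rfl⟩]

lemma spine_ne_apex (n m : ℕ) : spine n m ≠ apex := fun h => by
  have := congrArg (fun q : fanSet => q.1.1) h
  simp only [spine, apex, pt, one_div, inv_eq_zero] at this
  exact (Nat.cast_add_one_pos n).ne' this

lemma coords_pt (n m : ℕ) :
    (1 / (pt n m).1, (pt n m).1 / (pt n m).2) = ((n : ℝ) + 1, (m : ℝ) + 1) := by
  simp only [pt, Prod.mk.injEq]
  constructor <;> field_simp

lemma spine_injective : Injective (uncurry spine) := by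
  rintro ⟨n, m⟩ ⟨n', m'⟩ h
  have := congrArg (fun q : fanSet => (1 / q.1.1, q.1.1 / q.1.2)) h
  simp only [uncurry_apply_pair, spine, coords_pt, Prod.mk.injEq, add_left_inj,
    Nat.cast_inj] at this
  rw [this.1, this.2]

lemma nhds_spine (n m : ℕ) : 𝓝 (spine n m) = pure (spine n m) := by
  refine le_antisymm ?_ (pure_le_nhds _)
  have hcoords : Tendsto (fun p : ℝ × ℝ => (1 / p.1, p.1 / p.2)) (𝓝 (pt n m))
      (𝓝 ((n : ℝ) + 1, (m : ℝ) + 1)) := by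
    rw [← coords_pt]
    exact ContinuousAt.tendsto (by fun_prop (disch := simp only [pt]; positivity))
  -- `p ↦ (1 / p.1, p.1 / p.2)` recovers `(n + 1, m + 1)` from `pt n m`, continuously there;
  -- at the apex it gives `(0, 0)` because `x / 0 = 0`.
  rw [nhds_subtype_eq_comap, le_pure_iff, mem_comap]
  refine ⟨_, hcoords (ball_mem_nhds _ one_pos), ?_⟩
  rintro ⟨p, rfl | ⟨k, l, rfl⟩⟩ hp
  · simp only [mem_preimage, div_zero, mem_ball, Prod.dist_eq, max_lt_iff, Real.dist_eq,
      zero_sub, abs_neg] at hp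
    linarith [le_abs_self ((n : ℝ) + 1), Nat.cast_nonneg (α := ℝ) n]
  · change (1 / (pt k l).1, (pt k l).1 / (pt k l).2) ∈ ball _ 1 at hp
    rw [coords_pt, mem_ball, Prod.dist_eq, max_lt_iff, dist_add_right, dist_add_right,
      Nat.dist_cast_real, Nat.dist_cast_real] at hp
    rw [Nat.pairwise_one_le_dist.eq hp.1.not_ge, Nat.pairwise_one_le_dist.eq hp.2.not_ge]
    rfl

lemma dist_spine_apex (n m : ℕ) : dist (spine n m) apex = 1 / ((n : ℝ) + 1) := by
  rw [Subtype.dist_eq]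
  simp only [spine, apex, pt, Prod.dist_eq, Real.dist_eq, sub_zero]
  rw [abs_of_pos (by positivity), abs_of_pos (by positivity), max_eq_left]
  gcongr
  exact le_mul_of_one_le_right (by positivity) (le_add_of_nonneg_left m.cast_nonneg)

lemma spine_mem_closedBall_apex {n m N : ℕ} :
    spine n m ∈ closedBall apex (1 / ((N : ℝ) + 1)) ↔ N ≤ n := by
  rw [mem_closedBall, dist_spine_apex, one_div_le_one_div (by positivity) (by positivity)]
  simp

lemma not_weaklyLocallyCompactSpace : ¬WeaklyLocallyCompactSpace fanSet := by
  intro h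
  obtain ⟨K, hK, hKapex⟩ := h.exists_compact_mem_nhds apex
  obtain ⟨N, -, hNK⟩ := nhds_basis_closedBall_inv_nat_succ.mem_iff.1 hKapex
  have hspine : (range (spine N)).Infinite :=
    infinite_range_of_injective fun m m' h => (Prod.mk.inj (@spine_injective (N, m) (N, m') h)).2
  obtain ⟨q, -, hq⟩ := hspine.exists_accPt_of_subset_isCompact hK
    (range_subset_iff.2 fun m => hNK (spine_mem_closedBall_apex.2 le_rfl))
  rw [accPt_iff_nhds] at hq
  obtain rfl | ⟨n, m, rfl⟩ := eq_apex_or_spine q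
  · obtain ⟨_, ⟨hball, m, rfl⟩, -⟩ :=
      hq _ (nhds_basis_closedBall_inv_nat_succ.mem_of_mem (i := N + 1) trivial)
    have := spine_mem_closedBall_apex.1 (by exact_mod_cast hball)
    omega
  · obtain ⟨_, ⟨rfl, -⟩, hne⟩ := hq _ (by rw [nhds_spine]; exact mem_pure.2 rfl)
    exact hne rfl

variable {X : Type*} {x : X} {Y : ℕ → ℕ → X}

open Classical in
noncomputable def lift (x : X) (Y : ℕ → ℕ → X) (q : fanSet) : X :=
  if h : ∃ p, uncurry spine p = q then uncurry Y h.choose else x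

@[simp] lemma lift_apex (x : X) (Y : ℕ → ℕ → X) : lift x Y apex = x :=
  dif_neg fun ⟨_, h⟩ => spine_ne_apex _ _ h

@[simp] lemma lift_spine (x : X) (Y : ℕ → ℕ → X) (n m : ℕ) : lift x Y (spine n m) = Y n m := by
  have h : ∃ p, uncurry spine p = spine n m := ⟨(n, m), rfl⟩
  rw [lift, dif_pos h, @spine_injective _ (n, m) h.choose_spec]
  rfl

lemma range_lift (x : X) (Y : ℕ → ℕ → X) : range (lift x Y) = insert x (⋃ n, range (Y n)) := by
  ext y
  simp only [mem_range, mem_insert_iff, mem_iUnion]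
  constructor
  · rintro ⟨q, rfl⟩
    obtain rfl | ⟨n, m, rfl⟩ := eq_apex_or_spine q
    exacts [Or.inl (lift_apex x Y), Or.inr ⟨n, m, (lift_spine x Y n m).symm⟩]
  · rintro (rfl | ⟨n, m, rfl⟩)
    exacts [⟨apex, lift_apex y Y⟩, ⟨spine n m, lift_spine x Y n m⟩]

lemma lift_injective (hY : Injective (uncurry Y)) (hYx : ∀ n m, Y n m ≠ x) :
    Injective (lift x Y) := by
  intro q q' h
  obtain rfl | ⟨n, m, rfl⟩ := eq_apex_or_spine q <;>
    obtain rfl | ⟨n', m', rfl⟩ := eq_apex_or_spine q' <;>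
    simp only [lift_apex, lift_spine] at h
  · rfl
  · exact absurd h.symm (hYx n' m')
  · exact absurd h (hYx n m)
  · exact congrArg (uncurry spine) (@hY (n, m) (n', m') h)

variable [TopologicalSpace X]

lemma not_accPt_iUnion_range [T2Space X] (hdisc : ∀ n c, ¬AccPt c (𝓟 (range (Y n))))
    (hlim : ∀ U ∈ 𝓝 x, ∀ᶠ n in atTop, range (Y n) ⊆ U) {c : X} (hc : c ≠ x) :
    ¬AccPt c (𝓟 (⋃ n, range (Y n))) := by
  obtain ⟨U, V, hU, hV, hUV⟩ := t2_separation_nhds hc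
  exact not_accPt_iUnion (hdisc · c) hU ((hlim V hV).mono fun n hn => hUV.mono_right hn)

lemma tendsto_lift_nhds_apex (hlim : ∀ U ∈ 𝓝 x, ∀ᶠ n in atTop, range (Y n) ⊆ U) :
    Tendsto (lift x Y) (𝓝 apex) (𝓝 x) := by
  refine nhds_basis_closedBall_inv_nat_succ.tendsto_left_iff.2 fun U hU => ?_
  obtain ⟨N, hN⟩ := eventually_atTop.1 (hlim U hU)
  refine ⟨N, trivial, fun q hq => ?_⟩
  obtain rfl | ⟨n, m, rfl⟩ := eq_apex_or_spine q
  · rw [lift_apex]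
    exact mem_of_mem_nhds hU
  · rw [lift_spine]
    exact hN n (spine_mem_closedBall_apex.1 hq) (mem_range_self m)

lemma comap_lift_nhds_le_nhds_apex (hYx : ∀ n m, Y n m ≠ x)
    (hdisc : ∀ n, ¬AccPt x (𝓟 (range (Y n)))) : comap (lift x Y) (𝓝 x) ≤ 𝓝 apex := by
  refine nhds_basis_closedBall_inv_nat_succ.ge_iff.2 fun N _ => ?_
  have hW : ∀ᶠ y in 𝓝 x, ∀ n ∈ Iio N, y ∉ range (Y n) :=
    (eventually_all_finite (finite_Iio N)).2 fun n _ =>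
      compl_mem_nhds_of_not_accPt (hdisc n) fun ⟨m, hm⟩ => hYx n m hm
  refine mem_comap.2 ⟨_, hW, fun q hq => ?_⟩
  obtain rfl | ⟨n, m, rfl⟩ := eq_apex_or_spine q
  · exact mem_closedBall_self (by positivity)
  · refine spine_mem_closedBall_apex.2 (not_lt.1 fun hn => ?_)
    exact hq n hn ⟨m, (lift_spine x Y n m).symm⟩

theorem isClosedEmbedding_lift [T2Space X] (hY : Injective (uncurry Y))
    (hYx : ∀ n m, Y n m ≠ x) (hdisc : ∀ n c, ¬AccPt c (𝓟 (range (Y n))))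
    (hlim : ∀ U ∈ 𝓝 x, ∀ᶠ n in atTop, range (Y n) ⊆ U) : IsClosedEmbedding (lift x Y) := by
  have hfar : ∀ c ≠ x, ∀ᶠ y in 𝓝 c, y ≠ x ∧ (y ∈ ⋃ n, range (Y n) → y = c) := fun c hc =>
    (eventually_ne_nhds hc).and
      (not_accPt_principal_iff.1 (not_accPt_iUnion_range hdisc hlim hc))
  refine ⟨⟨isInducing_iff_nhds.2 fun q => ?_, lift_injective hY hYx⟩, ?_⟩
  · obtain rfl | ⟨n, m, rfl⟩ := eq_apex_or_spine q
    · rw [lift_apex]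
      exact le_antisymm (tendsto_lift_nhds_apex hlim).le_comap
        (comap_lift_nhds_le_nhds_apex hYx (hdisc · x))
    · rw [nhds_spine]
      refine le_antisymm (tendsto_pure_nhds _ _).le_comap ?_
      rw [lift_spine]
      refine le_pure_iff.2 (mem_comap.2 ⟨_, hfar _ (hYx n m), fun q hq => ?_⟩)
      obtain rfl | ⟨n', m', rfl⟩ := eq_apex_or_spine q
      · exact absurd (lift_apex x Y) hq.1
      · rw [mem_preimage, lift_spine] at hq
        exact congrArg (uncurry spine) (@hY (n', m') (n, m) (hq.2 (mem_iUnion.2 ⟨n', m', rfl⟩)))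
  · rw [range_lift, ← isOpen_compl_iff, isOpen_iff_mem_nhds]
    intro c hc
    rw [mem_compl_iff, mem_insert_iff, not_or] at hc
    filter_upwards [hfar c hc.1] with y hy hyS
    obtain rfl | hyS := mem_insert_iff.1 hyS
    exacts [hy.1 rfl, hc.2 (hy.2 hyS ▸ hyS)]

end FanSet

theorem not_locallyCompact_iff_closed_fan_general (M : Type*) [TopologicalSpace M]
    [TopologicalSpace.MetrizableSpace M] :
    ¬WeaklyLocallyCompactSpace M ↔
      ∃ e : ↥fanSet → M, Topology.IsEmbedding e ∧ IsClosed (Set.range e) := by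
  refine ⟨fun hM => ?_, fun ⟨e, he, hclosed⟩ hM => FanSet.not_weaklyLocallyCompactSpace
    (IsClosedEmbedding.weaklyLocallyCompactSpace ⟨he, hclosed⟩)⟩
  obtain ⟨x, hx⟩ : ∃ x : M, ∀ K ∈ 𝓝 x, ¬IsCompact K := by
    by_contra! h
    exact hM ⟨fun x => (h x).imp fun _ => And.symm⟩
  obtain ⟨Y, hY, hYx, hdisc, hlim⟩ := exists_fan_spines hx
  have he := FanSet.isClosedEmbedding_lift hY hYx hdisc hlim
  exact ⟨_, he.isEmbedding, he.isClosed_range⟩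

/-- a separable metrizable space is not locally compact iff it
contains a closed copy of the metric fan. -/
theorem not_locallyCompact_iff_closed_fan (M : Type*) [TopologicalSpace M]
    [TopologicalSpace.MetrizableSpace M] [TopologicalSpace.SeparableSpace M] :
    ¬WeaklyLocallyCompactSpace M ↔
      ∃ e : ↥fanSet → M, Topology.IsEmbedding e ∧ IsClosed (Set.range e) :=
  not_locallyCompact_iff_closed_fan_general M
end

section
/- Let M be a separable metrizable space whose set M′ of non-isolated points is not compact. Then 𝐤(M) ≥_T 𝐤𝐜(M), i.e. there is a Tukey morphism from the relation (CS(M), K(M), ̸⊥) to the relation (M, K(M), ∈). -/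
open Set Topology Filter

universe u v u' v'

/-! Since `M′` is closed and not compact, some sequence `u` in `M′` has only finitely many terms
in each compact set. Sending the countably many isolated points injectively to terms of `u` gives
`g : M → M′`, the identity on `M′`, with `g ⁻¹' K \ K` finite for every compact `K`. Then
`x ↦` (a sequence converging to `g x`) and `K ↦ K ∪ g ⁻¹' K` form a Tukey morphism, because a
convergent sequence whose trace on `K` is not closed in `K` has its limit in `K`. -/

open OnePoint

section NonIsolated

variable {X : Type*} [TopologicalSpace X]

lemma nonIsolated_eq_derivedSet_univ : nonIsolated X = derivedSet univ := by
  ext x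
  simp only [nonIsolated, mem_ofPred_eq, mem_derivedSet, AccPt, principal_univ, inf_top_eq,
    isOpen_singleton_iff_punctured_nhds, ← neBot_iff]

lemma isClosed_nonIsolated [T1Space X] : IsClosed (nonIsolated X) :=
  nonIsolated_eq_derivedSet_univ (X := X) ▸ isClosed_derivedSet univ

lemma countable_compl_nonIsolated [TopologicalSpace.SeparableSpace X] :
    (nonIsolated X)ᶜ.Countable := by
  obtain ⟨s, hs, hsd⟩ := TopologicalSpace.exists_countable_dense X
  refine hs.mono fun x hx => ?_
  obtain ⟨y, rfl, hy⟩ := hsd.inter_open_nonempty {x} (not_not.mp hx) (singleton_nonempty x)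
  exact hy

lemma exists_injective_tendsto_of_mem_nonIsolated [FirstCountableTopology X] [T1Space X] {p : X}
    (hp : p ∈ nonIsolated X) :
    ∃ y : ℕ → X, Function.Injective y ∧ (∀ n, y n ≠ p) ∧ Tendsto y atTop (𝓝 p) := by
  have : (𝓝[≠] p).NeBot := neBot_iff.mpr ((isOpen_singleton_iff_punctured_nhds p).not.mp hp)
  obtain ⟨x, hx⟩ := (𝓝[≠] p).exists_seq_tendsto
  set S := range x \ {p}
  have hfin : ∀ U ∈ 𝓝 p, (S \ U).Finite := fun U hU =>
    ((Nat.cofinite_eq_atTop ▸ tendsto_nhds_of_tendsto_nhdsWithin hx) hU).image x |>.subset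
      (by rintro _ ⟨⟨⟨n, rfl⟩, -⟩, hn⟩; exact mem_image_of_mem x hn)
  have hS : S.Infinite := fun hS => by
    obtain ⟨n, hnp, hnS⟩ := (hx.eventually (inter_mem_nhdsWithin _
      (hS.isClosed.isOpen_compl.mem_nhds fun h => h.2 rfl))).exists
    exact hnS ⟨mem_range_self n, hnp⟩
  refine ⟨fun n => hS.natEmbedding S n, Subtype.val_injective.comp (hS.natEmbedding S).injective,
    fun n => (hS.natEmbedding S n).2.2, ?_⟩
  rw [← Nat.cofinite_eq_atTop]
  intro U hU
  rw [mem_map, mem_cofinite]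
  exact ((hfin U hU).preimage_embedding
    ((hS.natEmbedding S).trans (Function.Embedding.subtype _))).subset
    fun n hn => ⟨(hS.natEmbedding S n).2, hn⟩

end NonIsolated

lemma exists_isEmbedding_onePoint_nat_of_mem_nonIsolated {X : Type*} [TopologicalSpace X]
    [FirstCountableTopology X] [T2Space X] {p : X} (hp : p ∈ nonIsolated X) :
    ∃ e : OnePoint ℕ → X, IsEmbedding e ∧ e ∞ = p := by
  obtain ⟨y, hy_inj, hy_ne, hy⟩ := exists_injective_tendsto_of_mem_nonIsolated hp
  let e : OnePoint ℕ → X := fun z => z.elim p y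
  have he_inj : Function.Injective e := by
    rintro (_ | m) (_ | n) hmn
    · rfl
    · exact absurd hmn.symm (hy_ne n)
    · exact absurd hmn (hy_ne m)
    · exact congrArg _ (hy_inj hmn)
  exact ⟨e, ((OnePoint.continuous_iff_from_nat e).mpr hy).isClosedEmbedding he_inj
    |>.isEmbedding, rfl⟩

lemma NotClosedIn.apply_infty_mem {X : Type*} [TopologicalSpace X] [T2Space X]
    {e : OnePoint ℕ → X} (he : Continuous e) {K : Set X}
    (h : NotClosedIn (e '' range ((↑) : ℕ → OnePoint ℕ)) K) : e ∞ ∈ K := by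
  by_contra hK
  refine h ⟨range e, (isCompact_range he).isClosed, ?_⟩
  rw [← image_univ (f := e), ← OnePoint.range_coe_union_infty, image_union, image_singleton,
    union_singleton, insert_inter_of_notMem hK]

lemma IsClosed.exists_seq_finite_preimage_of_not_isCompact {X : Type*} [TopologicalSpace X]
    [TopologicalSpace.PseudoMetrizableSpace X] {s : Set X} (hs : IsClosed s)
    (h : ¬IsCompact s) :
    ∃ u : ℕ → X, (∀ n, u n ∈ s) ∧ ∀ K, IsCompact K → (u ⁻¹' K).Finite := by
  have h : ¬IsSeqCompact s := mt IsSeqCompact.isCompact h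
  simp only [IsSeqCompact, not_forall, not_exists, not_and] at h
  obtain ⟨u, hu_mem, hu⟩ := h
  refine ⟨u, hu_mem, fun K hK => not_infinite.mp fun hinf => ?_⟩
  obtain ⟨a, haK, φ, hφ, hconv⟩ := hK.tendsto_subseq' (Nat.frequently_atTop_iff_infinite.mpr hinf)
  exact hu a (hs.mem_of_tendsto hconv (Eventually.of_forall fun n => hu_mem _)) φ hφ hconv

lemma kRel_tukey_kcRel_of_map_nonIsolated {X : Type*} [TopologicalSpace X]
    [FirstCountableTopology X] [T2Space X] (g : X → X) (hg : ∀ x, g x ∈ nonIsolated X)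
    (hfin : ∀ K, IsCompact K → (g ⁻¹' K \ K).Finite) : (kRel X).Tukey (kcRel X) := by
  choose E hE hE_infty using fun x => exists_isEmbedding_onePoint_nat_of_mem_nonIsolated (hg x)
  refine ⟨fun x => ⟨_, E x, hE x, rfl⟩,
    fun K => ⟨K.1 ∪ g ⁻¹' K.1, union_sdiff_self ▸ K.2.union (hfin K.1 K.2).isCompact⟩, ?_⟩
  intro x K hxK
  exact Or.inr (show g x ∈ K.1 from
    hE_infty x ▸ NotClosedIn.apply_infty_mem (hE x).continuous hxK)

lemma exists_map_nonIsolated_finite_preimage_diff {X : Type*} [TopologicalSpace X]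
    [TopologicalSpace.MetrizableSpace X] [TopologicalSpace.SeparableSpace X]
    (h : ¬IsCompact (nonIsolated X)) :
    ∃ g : X → X, (∀ x, g x ∈ nonIsolated X) ∧ ∀ K, IsCompact K → (g ⁻¹' K \ K).Finite := by
  classical
  obtain ⟨u, hu_mem, hu⟩ := isClosed_nonIsolated.exists_seq_finite_preimage_of_not_isCompact h
  obtain ⟨j, hj⟩ := countable_iff_exists_injOn.mp (countable_compl_nonIsolated (X := X))
  refine ⟨(nonIsolated X).piecewise id (u ∘ j), fun x => ?_, fun K hK => ?_⟩
  · by_cases hx : x ∈ nonIsolated X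
    · rwa [piecewise_eq_of_mem _ _ _ hx]
    · rw [piecewise_eq_of_notMem _ _ _ hx]
      exact hu_mem (j x)
  · have hsub : (nonIsolated X).piecewise id (u ∘ j) ⁻¹' K \ K ⊆
        (nonIsolated X)ᶜ ∩ j ⁻¹' (u ⁻¹' K) := by
      rintro x ⟨hxg, hxK⟩
      by_cases hx : x ∈ nonIsolated X
      · rw [mem_preimage, piecewise_eq_of_mem _ _ _ hx] at hxg
        exact absurd hxg hxK
      · rw [mem_preimage, piecewise_eq_of_notMem _ _ _ hx] at hxg
        exact ⟨hx, hxg⟩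
    exact ((hu K hK).subset (image_subset_iff.mpr inter_subset_right)).of_finite_image
      (hj.mono inter_subset_left) |>.subset hsub

/-- if `M` is separable metrizable and its set of non-isolated
points is not compact, then `𝐤(M) ≥_T 𝐤𝐜(M)`. -/
theorem kRel_tukey_kcRel (M : Type u) [TopologicalSpace M]
    [TopologicalSpace.MetrizableSpace M] [TopologicalSpace.SeparableSpace M]
    (h : ¬IsCompact (nonIsolated M)) :
    (kRel M).Tukey (kcRel M) := by
  obtain ⟨g, hg, hfin⟩ := exists_map_nonIsolated_finite_preimage_diff h
  exact kRel_tukey_kcRel_of_map_nonIsolated g hg hfin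
end

section
/- Let M be a separable metrizable space. Then 𝐤𝐜(M)^ω ≥_T 𝐤(M): there is a Tukey morphism from the countable power of the compact-cover relation, namely (M^ℕ, K(M)^ℕ, ∈^ℕ) where (x_n)_n ∈^ℕ (K_n)_n iff x_n ∈ K_n for every n, to the k-structure 𝐤(M) = (CS(M), K(M), ̸⊥). -/
open Set Topology Filter

universe u v u' v'

/-- The countable power `𝐤𝐜(M)^ω` of the compact-cover relation. -/
def kcPowRel (M : Type u) [TopologicalSpace M] : TRel :=
  ⟨ℕ → M, ℕ → {K : Set M // IsCompact K}, fun x K => ∀ n, x n ∈ (K n).1⟩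

/-! Fix a compatible metric. A convergent sequence `S` with limit `x ∉ S` is sent to the sequence
`(x, s₀, s₁, …)` of `M^ℕ`, where `sₙ ∈ S` and `d(sₙ, x) ≤ 2⁻ⁿ`. A sequence of compact sets `(Kₙ)`
is sent to `K₀` together with the points of `Kₙ₊₁` within `2⁻ⁿ` of `K₀`, which is compact because
these pieces can only accumulate on `K₀`. If `x ∈ K₀` and `sₙ ∈ Kₙ₊₁` for all `n`, this compact set
contains `x` and all `sₙ`, so `S` meets it in a set having `x ∉ S` as a limit point: not relatively
closed. -/

theorem isCompact_union_iUnion_of_tendsto_smallSets {X : Type u} [TopologicalSpace X]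
    {K : Set X} {A : ℕ → Set X} (hK : IsCompact K) (hA : ∀ n, IsCompact (A n))
    (hAK : Tendsto A atTop (𝓝ˢ K).smallSets) : IsCompact (K ∪ ⋃ n, A n) := by
  classical
  refine isCompact_of_finite_subcover fun U hU hcover => ?_
  obtain ⟨t₀, ht₀⟩ := hK.elim_finite_subcover U hU (subset_union_left.trans hcover)
  obtain ⟨N, hN⟩ := eventually_atTop.mp <| tendsto_smallSets_iff.mp hAK _
    ((isOpen_biUnion fun i _ => hU i).mem_nhdsSet.mpr ht₀)
  have hL : IsCompact (K ∪ ⋃ n ∈ Finset.range N, A n) :=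
    hK.union (Finset.isCompact_biUnion _ fun n _ => hA n)
  obtain ⟨t₁, ht₁⟩ := hL.elim_finite_subcover U hU <|
    union_subset (subset_union_left.trans hcover) <|
      iUnion₂_subset fun n _ => (subset_iUnion A n).trans (subset_union_right.trans hcover)
  refine ⟨t₀ ∪ t₁, ?_⟩
  rw [Finset.set_biUnion_union]
  refine union_subset (subset_union_left.trans (ht₁.trans subset_union_right)) <|
    iUnion_subset fun n => ?_
  rcases lt_or_ge n N with hn | hn
  · have hAL : A n ⊆ K ∪ ⋃ n ∈ Finset.range N, A n := subset_union_of_subset_right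
      (subset_biUnion_of_mem (Finset.mem_coe.2 (Finset.mem_range.2 hn))) _
    exact hAL.trans (ht₁.trans subset_union_right)
  · exact (hN n hn).trans subset_union_left

theorem IsCompact.tendsto_smallSets_nhdsSet {M : Type u} [PseudoMetricSpace M] {K : Set M}
    (hK : IsCompact K) {A : ℕ → Set M} {ε : ℕ → ℝ} (hε : Tendsto ε atTop (𝓝 0))
    (hA : ∀ n, A n ⊆ Metric.cthickening (ε n) K) : Tendsto A atTop (𝓝ˢ K).smallSets := by
  refine (Metric.hasBasis_nhdsSet_cthickening hK).smallSets.tendsto_right_iff.mpr fun δ hδ => ?_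
  filter_upwards [hε.eventually (gt_mem_nhds hδ)] with n hn
  exact (hA n).trans (Metric.cthickening_mono hn.le K)

theorem notClosedIn_of_mem_closure_inter {X : Type u} [TopologicalSpace X] {S T : Set X} {x : X}
    (hxT : x ∈ T) (hxS : x ∉ S) (hx : x ∈ closure (S ∩ T)) : NotClosedIn S T := by
  rintro ⟨C, hC, hST⟩
  have hxC : x ∈ C := closure_minimal inter_subset_left hC (hST ▸ hx)
  have hxST : x ∈ S ∩ T := hST ▸ ⟨hxC, hxT⟩
  exact hxS hxST.1

theorem exists_notMem_mem_closure_of_mem_CS {X : Type u} [TopologicalSpace X] {S : Set X}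
    (hS : S ∈ CS X) : ∃ x ∉ S, x ∈ closure S := by
  obtain ⟨e, he, rfl⟩ := hS
  refine ⟨e OnePoint.infty, ?_, ?_⟩
  · rintro ⟨_, ⟨n, rfl⟩, hn⟩
    exact OnePoint.coe_ne_infty n (he.injective hn)
  · have hinfty : OnePoint.infty ∈ closure (range ((↑) : ℕ → OnePoint ℕ)) := by
      rw [OnePoint.denseRange_coe.closure_range]
      trivial
    exact image_closure_subset_closure_image he.continuous ⟨_, hinfty, rfl⟩

theorem exists_seq_dist_le_of_mem_CS {M : Type u} [PseudoMetricSpace M] {S : Set M}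
    (hS : S ∈ CS M) : ∃ x ∉ S, ∃ s : ℕ → M, (∀ n, s n ∈ S) ∧ ∀ n, dist (s n) x ≤ (1 / 2) ^ n := by
  obtain ⟨x, hxS, hx⟩ := exists_notMem_mem_closure_of_mem_CS hS
  choose s hsS hsx using fun n : ℕ => Metric.mem_closure_iff.mp hx _ (pow_pos one_half_pos n)
  exact ⟨x, hxS, s, hsS, fun n => (dist_comm (s n) x).trans_le (hsx n).le⟩

section UnionNear

variable {M : Type u} [PseudoMetricSpace M] {K₀ : Set M} {L : ℕ → Set M}

def unionNear (K₀ : Set M) (L : ℕ → Set M) : Set M :=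
  K₀ ∪ ⋃ n, L n ∩ Metric.cthickening ((1 / 2 : ℝ) ^ n) K₀

theorem IsCompact.unionNear (hK₀ : IsCompact K₀) (hL : ∀ n, IsCompact (L n)) :
    IsCompact (unionNear K₀ L) :=
  isCompact_union_iUnion_of_tendsto_smallSets hK₀
    (fun n => (hL n).inter_right Metric.isClosed_cthickening)
    (hK₀.tendsto_smallSets_nhdsSet
      (tendsto_pow_atTop_nhds_zero_of_lt_one one_half_pos.le one_half_lt_one)
      fun _ => inter_subset_right)

theorem mem_unionNear_of_dist_le {x y : M} {n : ℕ} (hx : x ∈ K₀) (hy : y ∈ L n)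
    (hyx : dist y x ≤ (1 / 2) ^ n) : y ∈ unionNear K₀ L :=
  Or.inr <| mem_iUnion.mpr ⟨n, hy, Metric.mem_cthickening_of_dist_le y x _ K₀ hx hyx⟩

end UnionNear

theorem kcPow_tukey_kRel_general (M : Type u) [TopologicalSpace M]
    [TopologicalSpace.MetrizableSpace M] :
    (kcPowRel M).Tukey (kRel M) := by
  let := TopologicalSpace.metrizableSpaceMetric M
  choose x hxS s hsS hsx using fun S : CS M => exists_seq_dist_le_of_mem_CS S.2
  refine ⟨fun S => fun | 0 => x S | n + 1 => s S n,
    fun K => ⟨unionNear (K 0).1 fun n => (K (n + 1)).1, (K 0).2.unionNear fun n => (K (n + 1)).2⟩,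
    fun S K hK => ?_⟩
  have hs : Tendsto (s S) atTop (𝓝 (x S)) :=
    tendsto_iff_dist_tendsto_zero.mpr <| squeeze_zero (fun _ => dist_nonneg) (hsx S)
      (tendsto_pow_atTop_nhds_zero_of_lt_one one_half_pos.le one_half_lt_one)
  exact notClosedIn_of_mem_closure_inter (Or.inl (hK 0)) (hxS S) <|
    mem_closure_of_tendsto hs <| Eventually.of_forall fun n =>
      ⟨hsS S n, mem_unionNear_of_dist_le (hK 0) (hK (n + 1)) (hsx S n)⟩

/-- for separable metrizable `M`, `𝐤𝐜(M)^ω ≥_T 𝐤(M)`. -/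
theorem kcPow_tukey_kRel (M : Type u) [TopologicalSpace M]
    [TopologicalSpace.MetrizableSpace M] [TopologicalSpace.SeparableSpace M] :
    (kcPowRel M).Tukey (kRel M) :=
  kcPow_tukey_kRel_general M
end

section
/- Let M be a nonempty separable metrizable space which is analytic (i.e. there is a continuous surjection from the Baire space ℕ→ℕ onto M) but not σ-compact. Then 𝐤(M) ≡_T (ℕ→ℕ, ≤) ≡_T 𝐤𝐜(M), where ≤ is the coordinatewise order on ℕ→ℕ. -/
open Set Topology Filter

universe u v u' v'

/-!
Write `M = f '' univ` with `f : (ℕ → ℕ) → M` continuous. The compact sets `f '' Iic γ` cover `M`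
cofinally in `γ`, which gives `(ℕ → ℕ, ≤) ≥_T 𝐤𝐜(M)`. For `𝐤(M)`, enlarge `f '' Iic γ` by the
parts of `f '' Iic (γ + γ k)` lying within `2⁻ᵏ` of it: the result `catchSet f γ` is still compact,
and once `γ` dominates preimages of the limit and of a subsequence of a convergent sequence, it
contains that subsequence and its limit.

The converse reductions rest on Hurewicz's theorem, in the form: some continuous injection
`e : (ℕ → ℕ) → M` pulls every compact set back to a coordinatewise bounded set. Embed `M` in a
compact metric space `Z`. A set `Y ⊆ M` not contained in any σ-compact set has a condensation point
`z ∈ Z \ M` for this σ-ideal, so `Y` contains a sequence of disjoint pieces `f '' cylinder x n`,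
again not contained in σ-compact sets, converging to `z`; a compact `K ⊆ M` stays away from `z`
and meets only finitely many of them. Iterating, the cylinders whose images meet `K` form a finitely
branching tree, whose branches are bounded. Then `g ↦ e g` and `g ↦ {e (g + δₙ) | n}` are Tukey
maps from `𝐤𝐜(M)` and `𝐤(M)` to `(ℕ → ℕ, ≤)`.
-/

open Function Metric TopologicalSpace PiNat

section InSigmaCompact

variable {X : Type*} [TopologicalSpace X]

def InSigmaCompact (s : Set X) : Prop := ∃ t, IsSigmaCompact t ∧ s ⊆ t

theorem InSigmaCompact.mono {s t : Set X} (hst : s ⊆ t) (ht : InSigmaCompact t) :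
    InSigmaCompact s :=
  let ⟨u, hu, htu⟩ := ht
  ⟨u, hu, hst.trans htu⟩

theorem IsCompact.inSigmaCompact {s : Set X} (hs : IsCompact s) : InSigmaCompact s :=
  ⟨s, hs.isSigmaCompact, subset_rfl⟩

theorem InSigmaCompact.biUnion {ι : Type*} {I : Set ι} (hI : I.Countable) {s : ι → Set X}
    (h : ∀ i ∈ I, InSigmaCompact (s i)) : InSigmaCompact (⋃ i ∈ I, s i) := by
  choose! t ht hst using h
  exact ⟨⋃ i ∈ I, t i, isSigmaCompact_biUnion hI ht, iUnion₂_mono hst⟩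

theorem InSigmaCompact.union {s t : Set X} (hs : InSigmaCompact s) (ht : InSigmaCompact t) :
    InSigmaCompact (s ∪ t) := by
  obtain ⟨u, hu, hsu⟩ := hs
  obtain ⟨v, hv, htv⟩ := ht
  refine ⟨u ∪ v, ?_, union_subset_union hsu htv⟩
  rw [union_eq_iUnion]
  exact isSigmaCompact_iUnion _ (Bool.forall_bool.2 ⟨hv, hu⟩)

theorem Set.nonempty_of_not_inSigmaCompact {s : Set X} (hs : ¬InSigmaCompact s) :
    s.Nonempty :=
  nonempty_iff_ne_empty.2 fun h => hs (h ▸ isCompact_empty.inSigmaCompact)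

theorem exists_forall_nhds_not_inSigmaCompact_image_inter [SecondCountableTopology X]
    {M : Type*} [TopologicalSpace M] {f : X → M} {A : Set X} {W : Set M}
    (hA : ¬InSigmaCompact (f '' A ∩ W)) :
    ∃ x ∈ A, ∀ V ∈ 𝓝 x, ¬InSigmaCompact (f '' V ∩ W) := by
  by_contra! h
  refine hA <| (HereditarilyLindelofSpace.isLindelof A).induction_on
    (fun s t hst => InSigmaCompact.mono (inter_subset_inter_left _ (image_mono hst)))
    (fun S hS hSp => ?_) fun x hx =>
      let ⟨V, hV, hpV⟩ := h x hx
      ⟨V, mem_nhdsWithin_of_mem_nhds hV, hpV⟩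
  rw [sUnion_eq_biUnion, image_iUnion₂, iUnion₂_inter]
  exact .biUnion hS hSp

theorem exists_notMem_range_forall_nhds_not_inSigmaCompact {M Z : Type*} [TopologicalSpace M]
    [TopologicalSpace Z] [CompactSpace Z] [SecondCountableTopology Z] {j : M → Z}
    (hj : IsInducing j) {Y : Set M} (hY : ¬InSigmaCompact Y) :
    ∃ z ∉ range j, ∀ U ∈ 𝓝 z, ¬InSigmaCompact (Y ∩ j ⁻¹' U) := by
  set p : Set Z → Prop := fun B => InSigmaCompact (Y ∩ j ⁻¹' B)
  have hmono : ∀ ⦃s t⦄, s ⊆ t → p t → p s := fun s t hst =>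
    InSigmaCompact.mono (inter_subset_inter_right _ (preimage_mono hst))
  have hunion : ∀ S : Set (Set Z), S.Countable → (∀ s ∈ S, p s) → p (⋃₀ S) := by
    intro S hS h
    change InSigmaCompact _
    rw [preimage_sUnion, inter_iUnion₂]
    exact .biUnion hS h
  set O := ⋃₀ {U | IsOpen U ∧ p U}
  have hO : p O := (HereditarilyLindelofSpace.isLindelof O).induction_on hmono hunion
    fun x ⟨U, ⟨hUo, hpU⟩, hxU⟩ => ⟨U, mem_nhdsWithin_of_mem_nhds (hUo.mem_nhds hxU), hpU⟩
  by_contra! h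
  have hOc : Oᶜ ⊆ range j := fun z hz => by
    by_contra hzj
    obtain ⟨U, hU, hpU⟩ := h z hzj
    obtain ⟨V, hVU, hVo, hzV⟩ := mem_nhds_iff.1 hU
    exact hz ⟨V, ⟨hVo, hmono hVU hpU⟩, hzV⟩
  have hcomp : IsCompact (j ⁻¹' Oᶜ) := (hj.isCompact_preimage_iff hOc).2
    (isOpen_sUnion fun U hU => hU.1).isClosed_compl.isCompact
  refine hY ((hO.union (hcomp.inSigmaCompact.mono (inter_subset_right (s := Y)))).mono
    fun y hy => ?_)
  by_cases hyO : j y ∈ O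
  exacts [Or.inl ⟨hy, hyO⟩, Or.inr ⟨hy, hyO⟩]

end InSigmaCompact

theorem PiNat.exists_cylinder_subset {x : ℕ → ℕ} {U : Set (ℕ → ℕ)} (hU : U ∈ 𝓝 x) (n₀ : ℕ) :
    ∃ n, n₀ < n ∧ cylinder x n ⊆ U := by
  obtain ⟨_, ⟨y, n, rfl⟩, hx, hsub⟩ := (isTopologicalBasis_cylinders _).mem_nhds_iff.1 hU
  rw [mem_cylinder_iff_eq] at hx
  exact ⟨max n (n₀ + 1), by omega, (cylinder_anti _ (le_max_left _ _)).trans (hx ▸ hsub)⟩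

theorem PiNat.mem_cylinder_of_le {x : ℕ → ℕ → ℕ} {n : ℕ → ℕ}
    (hx : ∀ k, x (k + 1) ∈ cylinder (x k) (n k)) (hn : Monotone n) {k k' : ℕ} (hkk' : k ≤ k') :
    x k' ∈ cylinder (x k) (n k) := by
  induction k', hkk' using Nat.le_induction with
  | base => exact self_mem_cylinder _ _
  | succ k' hkk' ih => exact fun i hi => (hx k' i (hi.trans_le (hn hkk'))).trans (ih i hi)

theorem PiNat.diag_mem_cylinder {x : ℕ → ℕ → ℕ} {n : ℕ → ℕ}
    (hx : ∀ k, x (k + 1) ∈ cylinder (x k) (n k)) (hn : StrictMono n) (k : ℕ) :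
    (fun i => x (i + 1) i) ∈ cylinder (x k) (n k) := fun i hi =>
  (mem_cylinder_of_le hx hn.monotone (le_max_right k (i + 1)) i
    ((Nat.lt_succ_self i).trans_le (hn.id_le (i + 1)))).symm.trans
    (mem_cylinder_of_le hx hn.monotone (le_max_left k (i + 1)) i hi)

theorem PiNat.continuous_comp_res {β : Type*} [TopologicalSpace β] (F : List ℕ → β) (n : ℕ) :
    Continuous fun w : ℕ → ℕ => F (res w n) :=
  IsLocallyConstant.continuous <| (IsLocallyConstant.iff_eventually_eq _).2 fun w => by
    filter_upwards [(isOpen_cylinder _ w n).mem_nhds (self_mem_cylinder w n)] with w' hw'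
    rw [cylinder_eq_res] at hw'
    rw [hw'.out]

theorem PiNat.bddAbove_setOf_forall_res_mem {T : Set (List ℕ)}
    (hT : ∀ s, {m | m :: s ∈ T}.Finite) : BddAbove {w : ℕ → ℕ | ∀ k, res w k ∈ T} := by
  set G := {w : ℕ → ℕ | ∀ k, res w k ∈ T}
  have hfin : ∀ k, ((fun w => res w k) '' G).Finite := by
    intro k
    induction k with
    | zero => exact (finite_singleton []).subset (by rintro _ ⟨w, -, rfl⟩; rfl)
    | succ k ih =>
      refine (ih.biUnion fun s _ => (hT s).image (· :: s)).subset ?_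
      rintro _ ⟨w, hw, rfl⟩
      exact mem_biUnion (mem_image_of_mem _ hw) ⟨w k, hw (k + 1), rfl⟩
  refine bddAbove_pi.2 fun k => BddAbove.mono ?_ ((hfin (k + 1)).image List.headI).bddAbove
  rintro _ ⟨w, hw, rfl⟩
  exact ⟨res w (k + 1), mem_image_of_mem _ hw, rfl⟩

section Scheme

/-- `N s = (x, n)` encodes the cylinder `cylinder x n` attached to the node `s` of the tree `ℕ^<ω`,
finite sequences being stored reversed, as by `PiNat.res`. -/
def IsNestedScheme (N : List ℕ → (ℕ → ℕ) × ℕ) : Prop :=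
  ∀ s m, (N (m :: s)).1 ∈ cylinder (N s).1 (N s).2 ∧ (N s).2 < (N (m :: s)).2

variable {N : List ℕ → (ℕ → ℕ) × ℕ} {M : Type*} {f : (ℕ → ℕ) → M}

variable (N) in
def schemeBranch (w : ℕ → ℕ) : ℕ → ℕ := fun i => (N (res w (i + 1))).1 i

variable (N) in
theorem continuous_schemeBranch : Continuous (schemeBranch N) :=
  continuous_pi fun i => continuous_comp_res (fun s => (N s).1 i) (i + 1)

theorem IsNestedScheme.schemeBranch_mem_cylinder (hN : IsNestedScheme N) (w : ℕ → ℕ) (k : ℕ) :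
    schemeBranch N w ∈ cylinder (N (res w k)).1 (N (res w k)).2 :=
  diag_mem_cylinder (x := fun k => (N (res w k)).1) (fun k => (hN (res w k) (w k)).1)
    (strictMono_nat_of_lt_succ fun k => (hN (res w k) (w k)).2) k

theorem IsNestedScheme.injective_comp_schemeBranch (hN : IsNestedScheme N)
    (hdisj : ∀ s, Pairwise (Disjoint on fun m => f '' cylinder (N (m :: s)).1 (N (m :: s)).2)) :
    Injective (f ∘ schemeBranch N) := by
  intro w w' h
  by_contra hne
  set k := firstDiff w w'
  have hres : res w' k = res w k := res_eq_res.2 fun m hm => (apply_eq_of_lt_firstDiff hm).symm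
  have hw' := hN.schemeBranch_mem_cylinder w' (k + 1)
  rw [res_succ, hres] at hw'
  exact (hdisj (res w k) (apply_firstDiff_ne hne)).ne_of_mem
    (mem_image_of_mem f (hN.schemeBranch_mem_cylinder w (k + 1))) (mem_image_of_mem f hw') h

theorem IsNestedScheme.bddAbove_preimage_comp_schemeBranch (hN : IsNestedScheme N) {K : Set M}
    (hfin : ∀ s, {m | (f '' cylinder (N (m :: s)).1 (N (m :: s)).2 ∩ K).Nonempty}.Finite) :
    BddAbove ((f ∘ schemeBranch N) ⁻¹' K) := by
  refine BddAbove.mono ?_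
    (bddAbove_setOf_forall_res_mem (T := {s | (f '' cylinder (N s).1 (N s).2 ∩ K).Nonempty}) hfin)
  exact fun w hw k => ⟨_, mem_image_of_mem f (hN.schemeBranch_mem_cylinder w k), hw⟩

end Scheme

section Hurewicz

variable {M Z : Type*} [TopologicalSpace M] [MetricSpace Z] {f : (ℕ → ℕ) → M} {j : M → Z}

theorem exists_seq_pairwise_disjoint_tendsto_smallSets {ι : Type*} {z : Z} {F : ι → Set Z}
    (h : ∀ ε > 0, ∃ i, F i ⊆ ball z ε ∧ ∃ δ > 0, Disjoint (F i) (ball z δ)) :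
    ∃ c : ℕ → ι, Pairwise (Disjoint on (F ∘ c)) ∧ Tendsto (F ∘ c) atTop (𝓝 z).smallSets := by
  have : Nonempty ι := let ⟨i, _⟩ := h 1 one_pos; ⟨i⟩
  choose! i hiε δ hδ hdisj using h
  -- `ρ (m + 1) ≤ δ (ρ m)`: the `m`-th piece misses the balls containing all later ones
  set ρ : ℕ → ℝ := fun m => Nat.rec 1 (fun _ r => min (δ r) (r / 2)) m
  have hsucc : ∀ m, ρ (m + 1) = min (δ (ρ m)) (ρ m / 2) := fun _ => rfl
  have hρ : ∀ m, 0 < ρ m := by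
    intro m
    induction m with
    | zero => exact one_pos
    | succ m ih => rw [hsucc]; exact lt_min (hδ _ ih) (half_pos ih)
  have hanti : Antitone ρ := antitone_nat_of_succ_le fun m => by
    rw [hsucc]; linarith [min_le_right (δ (ρ m)) (ρ m / 2), hρ m]
  have hle : ∀ m, ρ m ≤ (1 / 2) ^ m := by
    intro m
    induction m with
    | zero => exact le_rfl
    | succ m ih => rw [hsucc, pow_succ]; linarith [min_le_right (δ (ρ m)) (ρ m / 2)]
  refine ⟨fun m => i (ρ m), (pairwise_disjoint_on _).2 fun m m' hlt => ?_, ?_⟩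
  · refine (hdisj _ (hρ m)).mono_right ((hiε _ (hρ m')).trans (ball_subset_ball ?_))
    exact (hanti hlt).trans (hsucc m ▸ min_le_left _ _)
  · rw [tendsto_smallSets_iff]
    intro U hU
    obtain ⟨ε, hε, hεU⟩ := Metric.mem_nhds_iff.1 hU
    filter_upwards [(tendsto_pow_atTop_nhds_zero_of_lt_one (by norm_num : (0 : ℝ) ≤ 1 / 2)
      (by norm_num)).eventually (gt_mem_nhds hε)] with m hm
    exact (hiε _ (hρ m)).trans ((ball_subset_ball ((hle m).trans hm.le)).trans hεU)

theorem exists_cylinder_image_subset_ball (hf : Continuous f) (hj : Continuous j)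
    {x₀ : ℕ → ℕ} {n₀ : ℕ} {z : Z} (hz : z ∉ range j)
    (hcond : ∀ U ∈ 𝓝 z, ¬InSigmaCompact (f '' cylinder x₀ n₀ ∩ j ⁻¹' U)) {ε : ℝ} (hε : 0 < ε) :
    ∃ x n, x ∈ cylinder x₀ n₀ ∧ n₀ < n ∧ ¬InSigmaCompact (f '' cylinder x n) ∧
      j '' (f '' cylinder x n) ⊆ ball z ε ∧
      ∃ δ > 0, Disjoint (j '' (f '' cylinder x n)) (ball z δ) := by
  obtain ⟨x, hx₀, hx⟩ := exists_forall_nhds_not_inSigmaCompact_image_inter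
    (hcond _ (ball_mem_nhds z (half_pos hε)))
  set y := j (f x)
  have hyz : 0 < dist y z := dist_pos.2 fun h => hz ⟨f x, h⟩
  set r := dist y z / 4 with hr
  obtain ⟨n, hn, hsub⟩ := exists_cylinder_subset
    ((hj.comp hf).continuousAt.preimage_mem_nhds (ball_mem_nhds y (by positivity : 0 < r))) n₀
  have himg : j '' (f '' cylinder x n) ⊆ ball y r := by
    rw [image_image]
    exact image_subset_iff.2 hsub
  have hheavy := hx _ ((isOpen_cylinder _ x n).mem_nhds (self_mem_cylinder x n))
  obtain ⟨_, ⟨v, hv, rfl⟩, hvz⟩ := nonempty_of_not_inSigmaCompact hheavy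
  have hvy : dist (j (f v)) y < r := himg ⟨_, ⟨v, hv, rfl⟩, rfl⟩
  replace hvz : dist (j (f v)) z < ε / 2 := hvz
  have hyz' : dist y z ≤ dist (j (f v)) y + dist (j (f v)) z := dist_triangle_left _ _ _
  refine ⟨x, n, hx₀, hn, fun h => hheavy (h.mono inter_subset_left), fun w hw => ?_, r,
    by positivity, disjoint_left.2 fun w hw hwz => ?_⟩
  · have := mem_ball.1 (himg hw)
    have := dist_triangle w y z
    rw [mem_ball]
    linarith [hr]
  · have := mem_ball.1 (himg hw)
    have := mem_ball.1 hwz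
    have := dist_triangle_left y z w
    linarith [hr]

theorem exists_cylinder_children [CompactSpace Z] (hf : Continuous f) (hj : IsInducing j)
    {x₀ : ℕ → ℕ} {n₀ : ℕ} (hx₀ : ¬InSigmaCompact (f '' cylinder x₀ n₀)) :
    ∃ c : ℕ → (ℕ → ℕ) × ℕ,
      (∀ m, (c m).1 ∈ cylinder x₀ n₀ ∧ n₀ < (c m).2 ∧
        ¬InSigmaCompact (f '' cylinder (c m).1 (c m).2)) ∧
      Pairwise (Disjoint on fun m => f '' cylinder (c m).1 (c m).2) ∧
      ∀ K, IsCompact K → {m | (f '' cylinder (c m).1 (c m).2 ∩ K).Nonempty}.Finite := by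
  obtain ⟨z, hz, hcond⟩ := exists_notMem_range_forall_nhds_not_inSigmaCompact hj hx₀
  obtain ⟨c, hdisj, hlim⟩ := exists_seq_pairwise_disjoint_tendsto_smallSets
    (ι := {p : (ℕ → ℕ) × ℕ // p.1 ∈ cylinder x₀ n₀ ∧ n₀ < p.2 ∧
      ¬InSigmaCompact (f '' cylinder p.1 p.2)})
    (F := fun p => j '' (f '' cylinder p.1.1 p.1.2)) fun ε hε => by
      obtain ⟨x, n, hx, hn, hheavy, hsub, hδ⟩ :=
        exists_cylinder_image_subset_ball hf hj.continuous hz hcond hε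
      exact ⟨⟨(x, n), hx, hn, hheavy⟩, hsub, hδ⟩
  refine ⟨fun m => (c m).1, fun m => (c m).2, fun m m' hne => (hdisj hne).of_image,
    fun K hK => ?_⟩
  have hKz : (j '' K)ᶜ ∈ 𝓝 z :=
    (hK.image hj.continuous).isClosed.isOpen_compl.mem_nhds fun ⟨k, _, hk⟩ => hz ⟨k, hk⟩
  obtain ⟨N, hN⟩ := eventually_atTop.1 (tendsto_smallSets_iff.1 hlim _ hKz)
  exact (finite_lt_nat N).subset fun m ⟨y, hyP, hyK⟩ => not_le.1 fun hmN =>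
    hN m hmN (mem_image_of_mem j hyP) (mem_image_of_mem j hyK)

theorem exists_continuous_injective_bddAbove_preimage [CompactSpace Z] (hj : IsInducing j)
    (hf : Continuous f) (hrange : ¬InSigmaCompact (range f)) :
    ∃ e : (ℕ → ℕ) → M, Continuous e ∧ Injective e ∧ ∀ K, IsCompact K → BddAbove (e ⁻¹' K) := by
  choose! child hchild hdisj hfin using fun (p : (ℕ → ℕ) × ℕ)
    (hp : ¬InSigmaCompact (f '' cylinder p.1 p.2)) => exists_cylinder_children hf hj hp
  set N : List ℕ → (ℕ → ℕ) × ℕ := fun s => s.foldr (fun m p => child p m) (0, 0)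
  have hheavy : ∀ s, ¬InSigmaCompact (f '' cylinder (N s).1 (N s).2) := by
    intro s
    induction s with
    | nil => simpa [N] using hrange
    | cons m s ih => exact (hchild _ ih m).2.2
  have hN : IsNestedScheme N := fun s m =>
    ⟨(hchild _ (hheavy s) m).1, (hchild _ (hheavy s) m).2.1⟩
  exact ⟨f ∘ schemeBranch N, hf.comp (continuous_schemeBranch N),
    hN.injective_comp_schemeBranch fun s => hdisj _ (hheavy s),
    fun K hK => hN.bddAbove_preimage_comp_schemeBranch fun s => hfin _ (hheavy s) K hK⟩

end Hurewicz

section ConvergentSequences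

variable {X : Type*} [TopologicalSpace X]

theorem exists_tendsto_of_mem_CS {S : Set X} (hS : S ∈ CS X) :
    ∃ (s : ℕ → X) (x : X), Tendsto s atTop (𝓝 x) ∧ (∀ n, s n ∈ S) ∧ x ∉ S := by
  obtain ⟨e, he, rfl⟩ := hS
  have hlim : Tendsto ((↑) : ℕ → OnePoint ℕ) atTop (𝓝 OnePoint.infty) := by
    simpa [coclosedCompact_eq_cocompact, Nat.cofinite_eq_atTop] using
      OnePoint.tendsto_coe_infty (X := ℕ)
  refine ⟨fun n => e n, e OnePoint.infty, (he.continuous.tendsto _).comp hlim,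
    fun n => ⟨n, ⟨n, rfl⟩, rfl⟩, ?_⟩
  rintro ⟨_, ⟨n, rfl⟩, h⟩
  exact OnePoint.coe_ne_infty n (he.injective h)

theorem range_mem_CS [T2Space X] {s : ℕ → X} {x : X} (hs : Tendsto s atTop (𝓝 x))
    (hinj : Injective s) (hx : ∀ n, s n ≠ x) : range s ∈ CS X := by
  set e : OnePoint ℕ → X := fun o => o.elim x s
  have hcont : Continuous e := (OnePoint.continuous_iff e).2
    ⟨by rw [coclosedCompact_eq_cocompact, cocompact_eq_cofinite, Nat.cofinite_eq_atTop]; exact hs,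
      continuous_of_discreteTopology⟩
  have hinj' : Injective e := by
    rintro (_ | m) (_ | n) h
    exacts [rfl, (hx n h.symm).elim, (hx m h).elim, congrArg _ (hinj h)]
  refine ⟨e, (hcont.isClosedEmbedding hinj').isEmbedding, ?_⟩
  rw [← range_comp]
  rfl

theorem notClosedIn_of_tendsto {S T : Set X} {u : ℕ → X} {x : X} (hu : ∀ k, u k ∈ S ∩ T)
    (hlim : Tendsto u atTop (𝓝 x)) (hxT : x ∈ T) (hxS : x ∉ S) : NotClosedIn S T := by
  rintro ⟨C, hC, hST⟩
  have hxC : x ∈ C := hC.mem_of_tendsto hlim (Eventually.of_forall fun k => (hST ▸ hu k).1)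
  exact hxS (hST ▸ ⟨hxC, hxT⟩ : x ∈ S ∩ T).1

theorem isCompact_of_forall_subset_union_isCompact {P A : Set X} (hP : IsCompact P)
    (hPA : P ⊆ A)
    (h : ∀ U, IsOpen U → P ⊆ U → ∃ K ⊆ A, IsCompact K ∧ A ⊆ U ∪ K) : IsCompact A := by
  classical
  refine isCompact_of_finite_subcover fun U hUo hAU => ?_
  obtain ⟨t₀, ht₀⟩ := hP.elim_finite_subcover U hUo (hPA.trans hAU)
  obtain ⟨K, hKA, hK, hAK⟩ := h _ (isOpen_biUnion fun i _ => hUo i) ht₀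
  obtain ⟨t₁, ht₁⟩ := hK.elim_finite_subcover U hUo (hKA.trans hAU)
  exact ⟨t₀ ∪ t₁, hAK.trans (Finset.set_biUnion_union t₀ t₁ U ▸ union_subset_union le_rfl ht₁)⟩

end ConvergentSequences

theorem isCompact_Iic_nat (γ : ℕ → ℕ) : IsCompact (Iic γ) :=
  Icc_bot (a := γ) ▸ isCompact_Icc

theorem exists_forall_le_add (h : ℕ → ℕ → ℕ) : ∃ g c : ℕ → ℕ, ∀ k i, h k i ≤ g i + c k := by
  refine ⟨fun i => ∑ k ∈ Finset.range (i + 1), h k i, fun k => ∑ i ∈ Finset.range k, h k i,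
    fun k i => ?_⟩
  rcases le_or_gt k i with hki | hik
  · exact le_add_right (Finset.single_le_sum (f := fun k => h k i) (fun _ _ => Nat.zero_le _)
      (Finset.mem_range.2 (Nat.lt_succ_of_le hki)))
  · exact le_add_left (Finset.single_le_sum (f := fun i => h k i) (fun _ _ => Nat.zero_le _)
      (Finset.mem_range.2 hik))

section Tukey

variable {X : Type u} [TopologicalSpace X]

theorem kcRel_tukey_baireRel {e : (ℕ → ℕ) → X} (he : ∀ K, IsCompact K → BddAbove (e ⁻¹' K)) :
    (kcRel X).Tukey baireRel := by
  choose b hb using fun K : {K : Set X // IsCompact K} => he K.1 K.2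
  exact ⟨e, b, fun g K hgK => hb K hgK⟩

theorem kRel_tukey_baireRel [T2Space X] {e : (ℕ → ℕ) → X} (hcont : Continuous e)
    (hinj : Injective e) (he : ∀ K, IsCompact K → BddAbove (e ⁻¹' K)) :
    (kRel X).Tukey baireRel := by
  choose b hb using fun K : {K : Set X // IsCompact K} => he K.1 K.2
  set bump : (ℕ → ℕ) → ℕ → ℕ → ℕ := fun g n => update g n (g n + 1)
  have hle : ∀ g n, g ≤ bump g n := fun g n i => by
    rcases eq_or_ne i n with rfl | hi
    · simp [bump]
    · simp [bump, update_of_ne hi]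
  have hlim : ∀ g, Tendsto (bump g) atTop (𝓝 g) := fun g =>
    tendsto_pi_nhds.2 fun i => tendsto_const_nhds.congr' <|
      (eventually_gt_atTop i).mono fun n hn => (update_of_ne hn.ne _ _).symm
  have hinj' : ∀ g, Injective (bump g) := fun g m n h => by
    by_contra hmn
    simpa [bump, update_of_ne hmn] using congrFun h m
  have hne : ∀ g n, bump g n ≠ g := fun g n h => by simpa [bump] using congrFun h n
  refine ⟨fun g => ⟨range (e ∘ bump g), range_mem_CS ((hcont.tendsto g).comp (hlim g))
    (hinj.comp (hinj' g)) fun n => hinj.ne (hne g n)⟩, b, fun g K hgK => ?_⟩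
  obtain ⟨_, ⟨n, rfl⟩, hnK⟩ : (range (e ∘ bump g) ∩ K.1).Nonempty :=
    nonempty_iff_ne_empty.2 fun h => hgK ⟨∅, isClosed_empty, by rw [h, empty_inter]⟩
  exact (hle g n).trans (hb K hnK)

theorem baireRel_tukey_kcRel {f : (ℕ → ℕ) → X} (hf : Continuous f) (hfs : Surjective f) :
    baireRel.Tukey (kcRel X) :=
  ⟨fun x => (hfs x).choose, fun γ => ⟨f '' Iic γ, (isCompact_Iic_nat γ).image hf⟩,
    fun x _ hle => ⟨_, hle, (hfs x).choose_spec⟩⟩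

end Tukey

section CatchSet

variable {X : Type*} [PseudoMetricSpace X] {f : (ℕ → ℕ) → X}

theorem isCompact_union_iUnion_inter_cthickening {P : Set X} (hP : IsCompact P)
    {C : ℕ → Set X} (hC : ∀ k, IsCompact (C k)) {r : ℕ → ℝ} (hr : Tendsto r atTop (𝓝 0)) :
    IsCompact (P ∪ ⋃ k, C k ∩ cthickening (r k) P) := by
  refine isCompact_of_forall_subset_union_isCompact hP subset_union_left fun U hUo hPU => ?_
  obtain ⟨δ, hδ, hδU⟩ := hP.exists_thickening_subset_open hUo hPU
  obtain ⟨N, hN⟩ := eventually_atTop.1 (hr.eventually (gt_mem_nhds hδ))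
  refine ⟨⋃ k ∈ Finset.range N, C k ∩ cthickening (r k) P,
    (iUnion₂_subset fun k _ => subset_iUnion (fun k => C k ∩ cthickening (r k) P) k).trans
      subset_union_right,
    (Finset.range N).finite_toSet.isCompact_biUnion fun k _ =>
      (hC k).inter_right isClosed_cthickening, ?_⟩
  rintro y (hy | ⟨_, ⟨k, rfl⟩, hyC, hyP⟩)
  · exact Or.inl (hPU hy)
  rcases lt_or_ge k N with hk | hk
  · exact Or.inr (mem_biUnion (Finset.mem_coe.2 (Finset.mem_range.2 hk)) ⟨hyC, hyP⟩)
  · exact Or.inl (hδU (cthickening_subset_thickening' hδ (hN k hk) P hyP))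

def catchSet (f : (ℕ → ℕ) → X) (γ : ℕ → ℕ) : Set X :=
  f '' Iic γ ∪ ⋃ k, f '' Iic (γ + const ℕ (γ k)) ∩ cthickening ((1 / 2) ^ k) (f '' Iic γ)

theorem isCompact_catchSet (hf : Continuous f) (γ : ℕ → ℕ) : IsCompact (catchSet f γ) :=
  isCompact_union_iUnion_inter_cthickening ((isCompact_Iic_nat γ).image hf)
    (fun _ => (isCompact_Iic_nat _).image hf)
    (tendsto_pow_atTop_nhds_zero_of_lt_one (by norm_num) (by norm_num))

theorem exists_forall_le_notClosedIn_catchSet (hfs : Surjective f) {S : Set X} (hS : S ∈ CS X) :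
    ∃ w, ∀ γ, w ≤ γ → NotClosedIn S (catchSet f γ) := by
  obtain ⟨s, x, hs, hsS, hxS⟩ := exists_tendsto_of_mem_CS hS
  have : ∀ k, ∃ n ≥ k, dist (s n) x ≤ (1 / 2) ^ k := fun k =>
    let ⟨N, hN⟩ := Metric.tendsto_atTop.1 hs _ (pow_pos (by norm_num) k)
    ⟨max N k, le_max_right _ _, (hN _ (le_max_left _ _)).le⟩
  choose n hnk hn using this
  choose pre hpre using fun k => hfs (s (n k))
  obtain ⟨u, rfl⟩ := hfs x
  obtain ⟨g, c, hgc⟩ := exists_forall_le_add pre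
  refine ⟨(u + g) ⊔ c, fun γ hγ => ?_⟩
  have hug : u + g ≤ γ := le_sup_left.trans hγ
  have hc : c ≤ γ := le_sup_right.trans hγ
  have hxA : f u ∈ f '' Iic γ := mem_image_of_mem f fun i => (Nat.le_add_right _ _).trans (hug i)
  have hcatch : ∀ k, s (n k) ∈ catchSet f γ := fun k =>
    Or.inr <| mem_iUnion.2 ⟨k, ⟨pre k, fun i => (hgc k i).trans
      (add_le_add ((Nat.le_add_left _ _).trans (hug i)) (hc k)), hpre k⟩,
      mem_cthickening_of_dist_le _ _ _ _ hxA (hn k)⟩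
  exact notClosedIn_of_tendsto (fun k => ⟨hsS _, hcatch k⟩)
    (hs.comp (tendsto_atTop_mono hnk tendsto_id)) (Or.inl hxA) hxS

theorem baireRel_tukey_kRel (hf : Continuous f) (hfs : Surjective f) :
    baireRel.Tukey (kRel X) := by
  choose w hw using fun S : ↥(CS X) => exists_forall_le_notClosedIn_catchSet hfs S.2
  exact ⟨w, fun γ => ⟨catchSet f γ, isCompact_catchSet hf γ⟩, fun S γ h => hw S γ h⟩

end CatchSet

theorem analytic_not_sigmaCompact_kRel_general (M : Type u) [TopologicalSpace M]
    [TopologicalSpace.MetrizableSpace M] [TopologicalSpace.SeparableSpace M]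
    (hanalytic : ∃ f : (ℕ → ℕ) → M, Continuous f ∧ Function.Surjective f)
    (hnotsigma : ¬∃ K : ℕ → Set M, (∀ n, IsCompact (K n)) ∧ (⋃ n, K n) = Set.univ) :
    (kRel M).TukeyEquiv baireRel ∧ baireRel.TukeyEquiv (kcRel M) := by
  let := metrizableSpaceMetric M
  obtain ⟨f, hf, hfs⟩ := hanalytic
  obtain ⟨j, hj⟩ := PiNatEmbed.exists_embedding_to_hilbert_cube (X := M)
  let := metrizableSpaceMetric (ℕ → unitInterval)
  have hrange : ¬InSigmaCompact (range f) := by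
    rintro ⟨t, ht, hsub⟩
    rw [hfs.range_eq, univ_subset_iff] at hsub
    exact hnotsigma (hsub ▸ ht)
  obtain ⟨e, hec, hei, heb⟩ := exists_continuous_injective_bddAbove_preimage hj.isInducing hf hrange
  exact ⟨⟨kRel_tukey_baireRel hec hei heb, baireRel_tukey_kRel hf hfs⟩,
    ⟨baireRel_tukey_kcRel hf hfs, kcRel_tukey_baireRel heb⟩⟩

/-- for a nonempty analytic, non-σ-compact separable metrizable
space `M`, `𝐤(M) ≡_T (ℕ→ℕ, ≤) ≡_T 𝐤𝐜(M)`. -/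
theorem analytic_not_sigmaCompact_kRel (M : Type u) [TopologicalSpace M]
    [TopologicalSpace.MetrizableSpace M] [TopologicalSpace.SeparableSpace M]
    [Nonempty M]
    (hanalytic : ∃ f : (ℕ → ℕ) → M, Continuous f ∧ Function.Surjective f)
    (hnotsigma : ¬∃ K : ℕ → Set M, (∀ n, IsCompact (K n)) ∧ (⋃ n, K n) = Set.univ) :
    (kRel M).TukeyEquiv baireRel ∧ baireRel.TukeyEquiv (kcRel M) :=
  analytic_not_sigmaCompact_kRel_general M hanalytic hnotsigma
end

section
/- Let M be a separable metrizable space which is not Menger. Then 𝐤(M) ≥_T (ℕ→ℕ, ≤), where ≤ is the coordinatewise order on ℕ→ℕ. -/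
open Set Topology Filter

universe u v u' v'

/-- The Menger covering property. -/
def IsMenger (X : Type u) [TopologicalSpace X] : Prop :=
  ∀ 𝒰 : ℕ → Set (Set X),
    (∀ n, (∀ U ∈ 𝒰 n, IsOpen U) ∧ ⋃₀ 𝒰 n = Set.univ) →
    ∃ 𝒱 : ℕ → Set (Set X),
      (∀ n, 𝒱 n ⊆ 𝒰 n ∧ (𝒱 n).Finite) ∧ (⋃ n, ⋃₀ 𝒱 n) = Set.univ

/-! Non-Mengerness yields increasing open covers `U n 0 ⊆ U n 1 ⊆ ⋯` of `M` such that no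
`f : ℕ → ℕ` makes `⋃ n, U n (f n)` cover `M`. For each `f` some non-isolated point `x f` is
missed, since countably many isolated points could be absorbed by enlarging `f`; the Tukey map
sends `f` to a sequence converging to `x f`. A compact `K` meeting that sequence in a non-closed
set contains `x f`, and lies in `U n (φ K n)` for every `n`; as `x f ∉ U n (f n)`,
monotonicity forces `f ≤ φ K`. -/

lemma Function.Injective.tendsto_cofinite_of_range_subset {α β γ : Type*} {l : Filter γ}
    {u : α → γ} {z : β → γ} (hz : Function.Injective z) (hzu : range z ⊆ range u)
    (hu : Tendsto u cofinite l) : Tendsto z cofinite l := by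
  choose g hg using fun b => hzu (mem_range_self b)
  have hg_inj : Function.Injective g := fun a b hab => hz (by rw [← hg a, ← hg b, hab])
  exact funext hg ▸ hu.comp hg_inj.tendsto_cofinite

lemma exists_subset_iUnion_of_countable {α : Type*} {U : ℕ → ℕ → Set α}
    (hcov : ∀ n, ⋃ m, U n m = univ) {Z : Set α} (hZ : Z.Countable) :
    ∃ g : ℕ → ℕ, Z ⊆ ⋃ n, U n (g n) := by
  rcases Z.eq_empty_or_nonempty with rfl | hne
  · exact ⟨0, empty_subset _⟩
  obtain ⟨z, rfl⟩ := hZ.exists_eq_range hne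
  choose g hg using fun n => mem_iUnion.1 ((hcov n).symm ▸ mem_univ (z n))
  exact ⟨g, range_subset_iff.2 fun n => mem_iUnion_of_mem n (hg n)⟩

section NotMenger

open Function OnePoint TopologicalSpace

variable {X : Type u} [TopologicalSpace X]

lemma exists_injective_tendsto_of_not_isOpen_singleton [FirstCountableTopology X] [T1Space X]
    {x : X} (hx : ¬IsOpen ({x} : Set X)) :
    ∃ z : ℕ → X, Injective z ∧ (∀ n, z n ≠ x) ∧ Tendsto z cofinite (𝓝 x) := by
  have : (𝓝[≠] x).NeBot := ⟨mt (isOpen_singleton_iff_punctured_nhds x).2 hx⟩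
  obtain ⟨u, hu⟩ := exists_seq_tendsto (𝓝[≠] x)
  have hu_cofinite : Tendsto u atTop cofinite := hu.mono_right (nhdsNE_le_cofinite x)
  -- `u` eventually leaves every finite set, so infinitely many of its values differ from `x`.
  have hinf : (range u \ {x}).Infinite := by
    intro hfin
    obtain ⟨n, hn⟩ := (hu_cofinite.eventually ((hfin.insert x).compl_mem_cofinite)).exists
    exact hn (by by_cases h : u n = x <;> simp [h])
  let z : ℕ → X := fun n => (hinf.natEmbedding _ n).1
  have hz_inj : Injective z := Subtype.val_injective.comp (hinf.natEmbedding _).injective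
  refine ⟨z, hz_inj, fun n => (hinf.natEmbedding _ n).2.2, ?_⟩
  refine hz_inj.tendsto_cofinite_of_range_subset (u := u) ?_ ?_
  · exact range_subset_iff.2 fun n => (hinf.natEmbedding _ n).2.1
  · exact Nat.cofinite_eq_atTop ▸ hu.mono_right nhdsWithin_le_nhds

lemma exists_isEmbedding_onePoint_nat [FirstCountableTopology X] [T2Space X]
    {x : X} (hx : ¬IsOpen ({x} : Set X)) :
    ∃ e : OnePoint ℕ → X, IsEmbedding e ∧ e ∞ = x := by
  obtain ⟨z, hz_inj, hz_ne, hz_tendsto⟩ := exists_injective_tendsto_of_not_isOpen_singleton hx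
  let e : OnePoint ℕ → X := fun o => o.elim x z
  have he_cont : Continuous e := (continuous_iff_from_discrete e).2 hz_tendsto
  have he_inj : Injective e := by
    rintro (_ | m) (_ | n) hmn
    · rfl
    · exact absurd hmn.symm (hz_ne n)
    · exact absurd hmn (hz_ne m)
    · exact congrArg _ (hz_inj hmn)
  exact ⟨e, (he_cont.isClosedEmbedding he_inj).isEmbedding, rfl⟩

lemma apply_infty_mem_of_notClosedIn [T2Space X] {e : OnePoint ℕ → X} (he : Continuous e)
    {K : Set X} (h : NotClosedIn (e '' range ((↑) : ℕ → OnePoint ℕ)) K) : e ∞ ∈ K := by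
  by_contra hK
  refine h ⟨closure (e '' range ((↑) : ℕ → OnePoint ℕ)), isClosed_closure, ?_⟩
  refine (inter_subset_inter_left _ subset_closure).antisymm ?_
  rintro y ⟨hy_closure, hyK⟩
  obtain ⟨o, rfl⟩ := closure_minimal (image_subset_range e _)
    (isCompact_range he).isClosed hy_closure
  induction o using OnePoint.rec with
  | infty => exact absurd hyK hK
  | coe n => exact ⟨mem_image_of_mem e (mem_range_self n), hyK⟩

lemma countable_of_forall_isOpen_singleton [SeparableSpace X] {Z : Set X}
    (hZ : ∀ x ∈ Z, IsOpen ({x} : Set X)) : Z.Countable :=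
  (pairwiseDisjoint_fiber id Z).countable_of_isOpen hZ fun x _ => singleton_nonempty x

lemma isMenger_of_isEmpty [IsEmpty X] : IsMenger X :=
  fun _ _ => ⟨fun _ => ∅, fun _ => ⟨empty_subset _, finite_empty⟩, Subsingleton.elim _ _⟩

lemma exists_monotone_covers_of_not_isMenger [LindelofSpace X] (h : ¬IsMenger X) :
    ∃ U : ℕ → ℕ → Set X, (∀ n m, IsOpen (U n m)) ∧ (∀ n, Monotone (U n)) ∧
      (∀ n, ⋃ m, U n m = univ) ∧ ∀ f : ℕ → ℕ, ⋃ n, U n (f n) ≠ univ := by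
  have : Nonempty X := not_isEmpty_iff.1 fun _ => h isMenger_of_isEmpty
  simp only [IsMenger, not_forall, not_exists, not_and] at h
  obtain ⟨𝒰, h𝒰, hfail⟩ := h
  have seq_subcover (n : ℕ) : ∃ V : ℕ → 𝒰 n, univ ⊆ ⋃ i, (V i : Set X) := by
    have : Nonempty (𝒰 n) := by
      obtain ⟨W, hW, -⟩ := mem_sUnion.1 ((h𝒰 n).2.symm ▸ mem_univ (Classical.arbitrary X))
      exact ⟨⟨W, hW⟩⟩
    refine isLindelof_univ.indexed_countable_subcover _ (fun W => (h𝒰 n).1 W W.2) ?_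
    rw [← sUnion_eq_iUnion, (h𝒰 n).2]
  choose V hV using seq_subcover
  refine ⟨fun n => accumulate fun i => (V n i : Set X), fun n m => ?_,
    fun n => monotone_accumulate, fun n => ?_, fun f hf => ?_⟩
  · exact isOpen_biUnion fun i _ => (h𝒰 n).1 _ (V n i).2
  · rw [iUnion_accumulate]
    exact univ_subset_iff.1 (hV n)
  · refine hfail (fun n => (fun i => (V n i : Set X)) '' Iic (f n))
      (fun n => ⟨image_subset_iff.2 fun i _ => (V n i).2, (finite_Iic _).image _⟩) ?_
    simpa only [sUnion_image, accumulate, mem_Iic] using hf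

lemma exists_not_isOpen_singleton_notMem_iUnion [SeparableSpace X] {U : ℕ → ℕ → Set X}
    (hmono : ∀ n, Monotone (U n)) (hcov : ∀ n, ⋃ m, U n m = univ)
    (hfail : ∀ f : ℕ → ℕ, ⋃ n, U n (f n) ≠ univ) (f : ℕ → ℕ) :
    ∃ x, ¬IsOpen ({x} : Set X) ∧ x ∉ ⋃ n, U n (f n) := by
  by_contra! hisolated
  obtain ⟨g, hg⟩ := exists_subset_iUnion_of_countable hcov
    (countable_of_forall_isOpen_singleton (Z := (⋃ n, U n (f n))ᶜ) fun x hx =>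
      by_contra fun h => hx (hisolated x h))
  refine hfail (f ⊔ g) (eq_univ_of_forall fun x => ?_)
  by_cases hx : x ∈ ⋃ n, U n (f n)
  · exact iUnion_mono (fun n => hmono n le_sup_left) hx
  · exact iUnion_mono (fun n => hmono n le_sup_right) (hg hx)

end NotMenger

/-- if a separable metrizable space `M` is not Menger then
`𝐤(M) ≥_T (ℕ→ℕ, ≤)`. -/
theorem not_menger_kRel_tukey_baire (M : Type u) [TopologicalSpace M]
    [TopologicalSpace.MetrizableSpace M] [TopologicalSpace.SeparableSpace M]
    (h : ¬IsMenger M) :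
    (kRel M).Tukey baireRel := by
  have : SecondCountableTopology M := by
    let := TopologicalSpace.pseudoMetrizableSpaceUniformity M
    have := TopologicalSpace.pseudoMetrizableSpaceUniformity_countably_generated M
    exact UniformSpace.secondCountable_of_separable M
  obtain ⟨U, hU_open, hU_mono, hU_cov, hU_fail⟩ := exists_monotone_covers_of_not_isMenger h
  choose x hx_nonisolated hx_notMem using
    exists_not_isOpen_singleton_notMem_iUnion hU_mono hU_cov hU_fail
  choose e he he_infty using fun f => exists_isEmbedding_onePoint_nat (hx_nonisolated f)
  choose φ hφ using fun (K : {K : Set M // IsCompact K}) n =>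
    K.2.elim_directed_cover (U n) (hU_open n) (hU_cov n ▸ subset_univ _) (hU_mono n).directed_le
  refine ⟨fun f => ⟨_, e f, he f, rfl⟩, φ, fun f K hfK n => ?_⟩
  have hxK : x f ∈ K.1 := he_infty f ▸ apply_infty_mem_of_notClosedIn (he f).continuous hfK
  by_contra! hlt
  exact hx_notMem f (mem_iUnion.2 ⟨n, hU_mono n hlt.le (hφ K n hxK)⟩)
end
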